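/- arXiv:math/0405490 — 10 statements merged into one kernel-verified Lean document; each statement's English description precedes it below -/
import Mathlib

section
/- If two entries of a multisymmetric function coincide, they merge with a binomial coefficient: e_{(α_1,α_2,...,α_k)}(f,f,f_3,...,f_k) = ((α_1+α_2)!/(α_1!α_2!)) · e_{(α_1+α_2,α_3,...,α_k)}(f,f_3,...,f_k). -/
/-!
Substituting `t₀ + t₁` for `t₀` in the generating product of `(f, f₃, …, f_k)` gives the
generating product of `(f, f, f₃, …, f_k)`, since `t₀ f(i) + t₁ f(i) = (t₀ + t₁) f(i)`.
By the binomial theorem, the coefficient of `t₀^α₁ t₁^α₂ t^β` in `q(t₀ + t₁, t)` is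
`C(α₁ + α₂, α₁)` times the coefficient of `t₀^(α₁+α₂) t^β` in `q`.
-/

open MvPolynomial Finset
open scoped Classical

noncomputable section

variable {R : Type*} [CommRing R]

/-- f(j): substitution y_i ↦ x_i(j). -/
def subst (m n : ℕ) (f : MvPolynomial (Fin m) R) (j : Fin n) :
    MvPolynomial (Fin m × Fin n) R :=
  rename (fun i => (i, j)) f

/-- the action of σ ∈ Sₙ on A_R(n,m). -/
def permRename (m n : ℕ) (σ : Equiv.Perm (Fin n)) :
    MvPolynomial (Fin m × Fin n) R →ₐ[R] MvPolynomial (Fin m × Fin n) R :=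
  rename (fun q => (q.1, σ q.2))

/-- invariant submodule A_R(n,m)^{Sₙ}. -/
def invSub (R : Type*) [CommRing R] (m n : ℕ) :
    Submodule R (MvPolynomial (Fin m × Fin n) R) where
  carrier := {p | ∀ σ : Equiv.Perm (Fin n), permRename m n σ p = p}
  add_mem' := fun ha hb σ => by simp [map_add, ha σ, hb σ]
  zero_mem' := fun σ => by simp
  smul_mem' := fun c p hp σ => by simp [map_smul, hp σ]

/-- invariant subalgebra A_R(n,m)^{Sₙ}. -/
def invAlg (R : Type*) [CommRing R] (m n : ℕ) :
    Subalgebra R (MvPolynomial (Fin m × Fin n) R) where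
  carrier := {p | ∀ σ : Equiv.Perm (Fin n), permRename m n σ p = p}
  add_mem' := fun ha hb σ => by simp [map_add, ha σ, hb σ]
  mul_mem' := fun ha hb σ => by simp [map_mul, ha σ, hb σ]
  algebraMap_mem' := fun r σ => by simp [permRename]

/-- e_α(f): coefficient of t^α in ∏ᵢ (1 + ∑ₕ tₕ fₕ(i)). -/
def eAlpha (m n : ℕ) {ι : Type*} [Fintype ι] (f : ι → MvPolynomial (Fin m) R) (α : ι → ℕ) :
    MvPolynomial (Fin m × Fin n) R :=
  coeff (Finsupp.equivFunOnFinite.symm α)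
    (∏ i : Fin n, (1 + ∑ h : ι, X h * C (subst m n (f h) i)))

/-- k-th elementary symmetric polynomial evaluated at v(1),…,v(n). -/
def esymVal {S : Type*} [CommRing S] (n : ℕ) (v : Fin n → S) (k : ℕ) : S :=
  ∑ A ∈ Finset.powersetCard k (Finset.univ : Finset (Fin n)), ∏ j ∈ A, v j

/-- multidegree of a monomial exponent. -/
def wdeg (m n : ℕ) (d : Fin m × Fin n →₀ ℕ) : Fin m → ℕ := fun i => ∑ j : Fin n, d (i, j)

/-- multidegree-a component of A_R(n,m). -/
def comp (R : Type*) [CommRing R] (m n : ℕ) (a : Fin m → ℕ) :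
    Submodule R (MvPolynomial (Fin m × Fin n) R) where
  carrier := {p | ∀ d ∈ p.support, wdeg m n d = a}
  add_mem' := fun ha hb d hd => by
    rcases Finset.mem_union.1 (MvPolynomial.support_add hd) with h | h
    · exact ha d h
    · exact hb d h
  zero_mem' := fun d hd => by simp at hd
  smul_mem' := fun c p hp d hd => hp d (MvPolynomial.support_smul hd)

/-- the restriction map πₙ₊₁ : A_R(n+1,m) → A_R(n,m), x_i(n+1) ↦ 0. -/
def projDown (R : Type*) [CommRing R] (m n : ℕ) :
    MvPolynomial (Fin m × Fin (n+1)) R →ₐ[R] MvPolynomial (Fin m × Fin n) R :=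
  aeval (fun p : Fin m × Fin (n+1) =>
    if h : (p.2 : ℕ) < n then X (p.1, ⟨p.2, h⟩) else 0)

/-- e_α for finitely supported α : M_m⁺ → ℕ. -/
def eAlphaM (R : Type*) [CommRing R] (m n : ℕ) (α : {d : Fin m →₀ ℕ // d ≠ 0} →₀ ℕ) :
    MvPolynomial (Fin m × Fin n) R :=
  eAlpha m n (fun l => monomial ((α.support.equivFin.symm l) : {d : Fin m →₀ ℕ // d ≠ 0}).1 (1 : R))
    (fun l => α (α.support.equivFin.symm l))

/-- a monomial of positive degree is primitive if it is not a proper power. -/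
def Primitive (m : ℕ) (d : Fin m →₀ ℕ) : Prop :=
  d ≠ 0 ∧ ∀ (e : Fin m →₀ ℕ) (k : ℕ), 2 ≤ k → d ≠ k • e

def splitFirstVar (k : ℕ) : MvPolynomial (Fin (k + 1)) R →ₐ[R] MvPolynomial (Fin (k + 2)) R :=
  aeval (Fin.cons (X 0 + X 1) fun i : Fin k => X i.succ.succ)

lemma splitFirstVar_sum_X_mul_C {k : ℕ} (a : Fin (k + 1) → R) :
    splitFirstVar k (∑ h, X h * C (a h)) =
      ∑ h, X h * C ((Fin.cons (a 0) a : Fin (k + 2) → R) h) := by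
  simp only [splitFirstVar, map_sum, map_mul, aeval_X, aeval_C, algebraMap_eq]
  rw [Fin.sum_univ_succ, Fin.sum_univ_succ, Fin.sum_univ_succ]
  simp only [Fin.cons_zero, Fin.cons_succ, Fin.cons_one, Fin.succ_zero_eq_one]
  ring

def splitExp {k : ℕ} (e : Fin (k + 1) →₀ ℕ) (j : ℕ) : Fin (k + 2) →₀ ℕ :=
  Finsupp.equivFunOnFinite.symm (Fin.cons j (Fin.cons (e 0 - j) fun i => e i.succ))

lemma splitFirstVar_monomial {k : ℕ} (e : Fin (k + 1) →₀ ℕ) (c : R) :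
    splitFirstVar k (monomial e c) =
      ∑ j ∈ range (e 0 + 1), monomial (splitExp e j) (c * (e 0).choose j) := by
  simp only [splitFirstVar, aeval_monomial, algebraMap_eq,
    Finsupp.prod_fintype _ _ (fun _ => pow_zero _), Fin.prod_univ_succ, Fin.cons_zero,
    Fin.cons_succ, add_pow, Finset.sum_mul, Finset.mul_sum]
  refine Finset.sum_congr rfl fun j _ => ?_
  simp only [monomial_eq, splitExp, Finsupp.prod_fintype _ _ (fun _ => pow_zero _),
    Fin.prod_univ_succ, Finsupp.coe_equivFunOnFinite_symm, Fin.cons_zero, Fin.cons_succ,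
    Fin.succ_zero_eq_one, map_mul, map_natCast]
  ring

lemma splitExp_eq_iff {k : ℕ} {e : Fin (k + 1) →₀ ℕ} {j : ℕ} (hj : j ≤ e 0)
    (α₁ α₂ : ℕ) (β : Fin k → ℕ) :
    splitExp e j = Finsupp.equivFunOnFinite.symm (Fin.cons α₁ (Fin.cons α₂ β)) ↔
      j = α₁ ∧ e = Finsupp.equivFunOnFinite.symm (Fin.cons (α₁ + α₂) β) := by
  simp only [splitExp, Finsupp.ext_iff, Fin.forall_fin_succ, Finsupp.coe_equivFunOnFinite_symm,
    Fin.cons_zero, Fin.cons_succ]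
  constructor <;> rintro ⟨rfl, h, hs⟩ <;> exact ⟨rfl, by omega, hs⟩

lemma coeff_splitFirstVar {k : ℕ} (α₁ α₂ : ℕ) (β : Fin k → ℕ)
    (q : MvPolynomial (Fin (k + 1)) R) :
    coeff (Finsupp.equivFunOnFinite.symm (Fin.cons α₁ (Fin.cons α₂ β))) (splitFirstVar k q) =
      (α₁ + α₂).choose α₁ * coeff (Finsupp.equivFunOnFinite.symm (Fin.cons (α₁ + α₂) β)) q := by
  induction q using MvPolynomial.induction_on' with
  | add p q hp hq => rw [map_add, coeff_add, coeff_add, hp, hq, mul_add]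
  | monomial e c =>
    rw [splitFirstVar_monomial, coeff_sum, coeff_monomial]
    have hterm : ∀ j ∈ range (e 0 + 1),
        coeff (Finsupp.equivFunOnFinite.symm (Fin.cons α₁ (Fin.cons α₂ β)))
          (monomial (splitExp e j) (c * (e 0).choose j)) =
        if j = α₁ ∧ e = Finsupp.equivFunOnFinite.symm (Fin.cons (α₁ + α₂) β)
          then c * (e 0).choose j else 0 := fun j hj => by
      rw [coeff_monomial, if_congr (splitExp_eq_iff (Nat.lt_succ_iff.mp (mem_range.mp hj)) _ _ _)
        rfl rfl]
    rw [Finset.sum_congr rfl hterm]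
    by_cases he : e = Finsupp.equivFunOnFinite.symm (Fin.cons (α₁ + α₂) β)
    · subst he
      simp [mul_comm]
    · simp [he]

theorem stmt6_general (R : Type*) [CommRing R] (m n k : ℕ)
    (f : MvPolynomial (Fin m) R) (fs : Fin k → MvPolynomial (Fin m) R)
    (α₁ α₂ : ℕ) (β : Fin k → ℕ) :
    eAlpha m n (Fin.cons f (Fin.cons f fs)) (Fin.cons α₁ (Fin.cons α₂ β)) =
      Nat.choose (α₁ + α₂) α₁ • eAlpha m n (Fin.cons f fs) (Fin.cons (α₁ + α₂) β) := by
  have hprod :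
      ∏ j : Fin n, (1 + ∑ h, X h * C (subst m n ((Fin.cons f (Fin.cons f fs) : Fin (k + 2) → _) h) j)) =
        splitFirstVar k
          (∏ j : Fin n, (1 + ∑ h, X h * C (subst m n ((Fin.cons f fs : Fin (k + 1) → _) h) j))) := by
    rw [map_prod]
    refine prod_congr rfl fun j _ => ?_
    rw [map_add, map_one, splitFirstVar_sum_X_mul_C]
    congr! 3 with h
    exact Fin.cases rfl (fun _ => rfl) h
  rw [eAlpha, eAlpha, hprod, coeff_splitFirstVar, nsmul_eq_mul]

/-- if the first two entries coincide then
e_{(α₁,α₂,α₃,…,α_k)}(f,f,f₃,…,f_k) = ((α₁+α₂)!/(α₁!α₂!)) · e_{(α₁+α₂,α₃,…,α_k)}(f,f₃,…,f_k). -/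
theorem stmt6 (R : Type*) [CommRing R] (m n k : ℕ)
    (f : MvPolynomial (Fin m) R) (fs : Fin k → MvPolynomial (Fin m) R)
    (α₁ α₂ : ℕ) (β : Fin k → ℕ) (hα : α₁ + α₂ + ∑ i, β i ≤ n) :
    eAlpha m n (Fin.cons f (Fin.cons f fs)) (Fin.cons α₁ (Fin.cons α₂ β)) =
      Nat.choose (α₁ + α₂) α₁ • eAlpha m n (Fin.cons f fs) (Fin.cons (α₁ + α₂) β) :=
  stmt6_general R m n k f fs α₁ α₂ β

end
end

section
/- For each multidegree a ∈ ℕ^m, the set { e_α : |α| ≤ n and ∂(e_α) = a } is an R-basis of the multidegree-a component A_R(n,m,a)^{S_n} of the ring of multisymmetric functions, where ∂(e_α) = ∑_μ α(μ)∂(μ). -/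
open MvPolynomial Finset
open scoped Classical

noncomputable section

variable {R : Type*} [CommRing R]

namespace Stmt8Aux
open List


variable {β : Type*}

/-- number of indices mapping to `b`. -/
def cnt {n : ℕ} (f : Fin n → β) (b : β) : ℕ := (Finset.univ.filter fun j => f j = b).card

lemma count_ofFn {n : ℕ} (f : Fin n → β) (b : β) :
    (List.ofFn f).count b = cnt f b := by
  classical
  have h1 : ((List.ofFn f : List β) : Multiset β) = Multiset.map f Finset.univ.val := by
    rw [List.ofFn_eq_map]; rfl
  have h2 : (List.ofFn f).count b = Multiset.count b (Multiset.map f Finset.univ.val) := by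
    rw [← h1, Multiset.coe_count]
  rw [h2, Multiset.count_map, cnt, Finset.card_def, Finset.filter_val]
  congr 1
  exact Multiset.filter_congr (fun x _ => eq_comm)

lemma cnt_congr {n : ℕ} {γ : Type*} {f : Fin n → β} {g : Fin n → γ} (b : β) (c : γ)
    (h : ∀ j, f j = b ↔ g j = c) : cnt f b = cnt g c := by
  rw [cnt, cnt, Finset.card_filter, Finset.card_filter]
  refine Finset.sum_congr rfl fun j _ => ?_
  by_cases hj : g j = c
  · rw [if_pos ((h j).mpr hj), if_pos hj]
  · rw [if_neg (fun hc => hj ((h j).mp hc)), if_neg hj]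

lemma cnt_eq_zero {n : ℕ} {f : Fin n → β} {b : β} (h : ∀ j, f j ≠ b) : cnt f b = 0 := by
  rw [cnt, Finset.card_eq_zero, Finset.filter_eq_empty_iff]
  exact fun j _ => h j

lemma cnt_pos {n : ℕ} {f : Fin n → β} {b : β} (j : Fin n) (h : f j = b) : 0 < cnt f b := by
  rw [cnt]
  exact Finset.card_pos.mpr ⟨j, Finset.mem_filter.mpr ⟨Finset.mem_univ j, h⟩⟩

lemma cnt_comp_perm {n : ℕ} (f : Fin n → β) (σ : Equiv.Perm (Fin n)) (b : β) :
    cnt (f ∘ ⇑σ) b = cnt f b := by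
  classical
  rw [← count_ofFn, ← count_ofFn]
  exact (σ.ofFn_comp_perm f).count_eq b

lemma cnt_pad {n : ℕ} (Lst : List β) (hlen : Lst.length ≤ n) (b0 b : β) (hb : b ≠ b0) :
    cnt (fun j : Fin n => if h : (j : ℕ) < Lst.length then Lst.get ⟨j, h⟩ else b0) b
      = Lst.count b := by
  classical
  have h0 : Lst.count b = cnt (Lst.get) b := by
    rw [← count_ofFn]; congr 1; exact (List.ofFn_get Lst).symm
  rw [h0, cnt, cnt]
  refine (Finset.card_bij (fun k _ => Fin.castLE hlen k) ?_ ?_ ?_).symm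
  · intro k hk
    simp only [Finset.mem_filter, Finset.mem_univ, true_and] at hk ⊢
    rw [dif_pos (by simpa using k.2)]
    simpa using hk
  · intro k1 _ k2 _ hk
    exact Fin.ext (congrArg Fin.val hk :
      ((Fin.castLE hlen k1 : Fin n) : ℕ) = (Fin.castLE hlen k2 : Fin n))
  · intro j hj
    simp only [Finset.mem_filter, Finset.mem_univ, true_and] at hj
    by_cases h : (j : ℕ) < Lst.length
    · refine ⟨⟨j, h⟩, by simpa [dif_pos h] using hj, rfl⟩
    · rw [dif_neg h] at hj; exact absurd hj.symm hb

lemma cnt_pad₂ {γ : Type*} {n : ℕ} (L : List γ) (hlen : L.length ≤ n) (emb : γ → β)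
    (hemb : Function.Injective emb) (b0 : β) (hb0 : ∀ c, emb c ≠ b0) (c : γ) :
    cnt (fun j : Fin n => if h : (j : ℕ) < L.length then emb (L.get ⟨j, h⟩) else b0) (emb c)
      = cnt (L.get) c := by
  rw [cnt, cnt]
  refine (Finset.card_bij (fun k _ => Fin.castLE hlen k) ?_ ?_ ?_).symm
  · intro k hk
    simp only [Finset.mem_filter, Finset.mem_univ, true_and] at hk ⊢
    rw [dif_pos (by simpa using k.2)]
    rw [show (⟨((Fin.castLE hlen k : Fin n) : ℕ), by simpa using k.2⟩ : Fin L.length) = k from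
      Fin.ext rfl]
    rw [hk]
  · intro k1 _ k2 _ hk
    exact Fin.ext (congrArg Fin.val hk :
      ((Fin.castLE hlen k1 : Fin n) : ℕ) = (Fin.castLE hlen k2 : Fin n))
  · intro j hj
    simp only [Finset.mem_filter, Finset.mem_univ, true_and] at hj
    by_cases h : (j : ℕ) < L.length
    · rw [dif_pos h] at hj
      refine ⟨⟨j, h⟩, ?_, rfl⟩
      simp only [Finset.mem_filter, Finset.mem_univ, true_and]
      exact hemb hj
    · rw [dif_neg h] at hj
      exact absurd hj.symm (hb0 c)

lemma cnt_toMultiset_get (M : Multiset β) (c : β) :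
    cnt (M.toList.get) c = M.count c := by
  rw [← count_ofFn, List.ofFn_get, ← Multiset.coe_count, Multiset.coe_toList]

lemma exists_perm {n : ℕ} [Countable β] {f g : Fin n → β} (h : ∀ b, cnt f b = cnt g b) :
    ∃ σ : Equiv.Perm (Fin n), f = g ∘ ⇑σ := by
  classical
  have hperm : (List.ofFn f).Perm (List.ofFn g) := by
    rw [List.perm_iff_count]
    intro b; rw [count_ofFn, count_ofFn]; exact h b
  obtain ⟨ef, hef⟩ := (countable_iff_exists_injective β).1 ‹_›
  set e : β ↪ ℕ := ⟨ef, hef⟩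
  set f' := ⇑e ∘ f with hf'
  set g' := ⇑e ∘ g with hg'
  set σf := Tuple.sort f' with hσf
  set σg := Tuple.sort g' with hσg
  have hs1 : List.ofFn (f' ∘ σf) = List.ofFn (g' ∘ σg) := by
    refine (fun hp h1 h2 => List.Perm.eq_of_sortedLE h1 h2 hp) ?_ ?_ ?_
    · calc List.ofFn (f' ∘ ⇑σf) ~ List.ofFn f' := σf.ofFn_comp_perm f'
        _ = List.map e (List.ofFn f) := by simp [hf', List.ofFn_eq_map, List.map_map]
        _ ~ List.map e (List.ofFn g) := hperm.map e
        _ = List.ofFn g' := by simp [hg', List.ofFn_eq_map, List.map_map]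
        _ ~ List.ofFn (g' ∘ ⇑σg) := (σg.ofFn_comp_perm g').symm
    · exact (Tuple.monotone_sort f').sortedLE_ofFn
    · exact (Tuple.monotone_sort g').sortedLE_ofFn
  have h2 : f' ∘ ⇑σf = g' ∘ ⇑σg := List.ofFn_injective hs1
  have h3 : f ∘ ⇑σf = g ∘ ⇑σg := by
    funext j
    exact e.injective (congrFun h2 j)
  refine ⟨σf.symm.trans σg, ?_⟩
  funext j
  have := congrFun h3 (σf.symm j)
  simpa using this

variable (m n : ℕ)

/-- the `j`-th column of an exponent vector. -/
def pcols (d : Fin m × Fin n →₀ ℕ) (j : Fin n) : Fin m →₀ ℕ :=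
  Finsupp.equivFunOnFinite.symm (fun i => d (i, j))

@[simp] lemma pcols_apply (d : Fin m × Fin n →₀ ℕ) (j : Fin n) (i : Fin m) :
    pcols m n d j i = d (i, j) := rfl

lemma eq_of_pcols {d d' : Fin m × Fin n →₀ ℕ}
    (h : ∀ j, pcols m n d j = pcols m n d' j) : d = d' := by
  ext q
  have := DFunLike.congr_fun (h q.2) q.1
  simpa using this

/-- the multiset of nonzero columns, as a finsupp. -/
def collate (d : Fin m × Fin n →₀ ℕ) : {μ : Fin m →₀ ℕ // μ ≠ 0} →₀ ℕ :=
  ∑ j : Fin n, if h : pcols m n d j = 0 then 0 else Finsupp.single ⟨pcols m n d j, h⟩ 1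

lemma collate_apply (d : Fin m × Fin n →₀ ℕ) (μ : {μ : Fin m →₀ ℕ // μ ≠ 0}) :
    collate m n d μ = cnt (pcols m n d) μ.1 := by
  rw [collate, Finsupp.finset_sum_apply, cnt, Finset.card_filter]
  refine Finset.sum_congr rfl fun j _ => ?_
  by_cases h : pcols m n d j = 0
  · rw [dif_pos h, if_neg (by rw [h]; exact fun hc => μ.2 hc.symm)]
    rfl
  · rw [dif_neg h, Finsupp.single_apply]
    by_cases h2 : pcols m n d j = μ.1
    · rw [if_pos (Subtype.ext h2), if_pos h2]
    · rw [if_neg (fun hc => h2 (congrArg Subtype.val hc)), if_neg h2]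

lemma collate_sum_eq (d : Fin m × Fin n →₀ ℕ) :
    ((collate m n d).sum fun _ v => v) = ∑ j : Fin n, if pcols m n d j = 0 then 0 else 1 := by
  rw [collate, ← Finsupp.sum_finsetSum_index (fun _ => rfl) (fun _ _ _ => rfl)]
  refine Finset.sum_congr rfl fun j _ => ?_
  by_cases h : pcols m n d j = 0
  · rw [dif_pos h, if_pos h, Finsupp.sum_zero_index]
  · rw [dif_neg h, if_neg h, Finsupp.sum_single_index rfl]

lemma collate_sum_le (d : Fin m × Fin n →₀ ℕ) :
    ((collate m n d).sum fun _ v => v) ≤ n := by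
  rw [collate_sum_eq]
  calc (∑ j : Fin n, if pcols m n d j = 0 then 0 else 1)
      ≤ ∑ _j : Fin n, 1 := Finset.sum_le_sum (fun j _ => by split <;> omega)
    _ = n := by simp

lemma collate_weight (d : Fin m × Fin n →₀ ℕ) (i : Fin m) :
    ((collate m n d).sum fun μ c => c * μ.1 i) = ∑ j : Fin n, d (i, j) := by
  rw [collate, ← Finsupp.sum_finsetSum_index (fun _ => by simp) (fun _ _ _ => by ring)]
  refine Finset.sum_congr rfl fun j _ => ?_
  by_cases h : pcols m n d j = 0
  · rw [dif_pos h, Finsupp.sum_zero_index]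
    have : d (i, j) = pcols m n d j i := rfl
    rw [this, h]; rfl
  · rw [dif_neg h, Finsupp.sum_single_index (by simp), one_mul]
    rfl

lemma cnt_pcols_zero (d : Fin m × Fin n →₀ ℕ) :
    cnt (pcols m n d) 0 + ((collate m n d).sum fun _ v => v) = n := by
  rw [collate_sum_eq, cnt, Finset.card_filter, ← Finset.sum_add_distrib]
  refine Eq.trans (Finset.sum_congr rfl fun x _ => ?_) (by simp : (∑ _x : Fin n, 1) = n)
  split <;> omega


def pmap (σ : Equiv.Perm (Fin n)) : Fin m × Fin n → Fin m × Fin n := fun q => (q.1, σ q.2)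

lemma pmap_injective (σ : Equiv.Perm (Fin n)) : Function.Injective (pmap m n σ) := by
  intro q q' h
  cases q; cases q'
  simpa [pmap, Prod.ext_iff, σ.injective.eq_iff] using h

lemma pcols_mapDomain (σ : Equiv.Perm (Fin n)) (d : Fin m × Fin n →₀ ℕ) (j : Fin n) :
    pcols m n (Finsupp.mapDomain (pmap m n σ) d) j = pcols m n d (σ⁻¹ j) := by
  ext i
  rw [pcols_apply, pcols_apply]
  have h1 : ((i, j) : Fin m × Fin n) = pmap m n σ (i, σ⁻¹ j) := by simp [pmap]
  rw [h1, Finsupp.mapDomain_apply (pmap_injective m n σ)]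

lemma collate_mapDomain (σ : Equiv.Perm (Fin n)) (d : Fin m × Fin n →₀ ℕ) :
    collate m n (Finsupp.mapDomain (pmap m n σ) d) = collate m n d := by
  ext μ
  rw [collate_apply, collate_apply]
  have h1 : pcols m n (Finsupp.mapDomain (pmap m n σ) d) = pcols m n d ∘ ⇑σ⁻¹ :=
    funext fun j => pcols_mapDomain m n σ d j
  rw [h1, cnt_comp_perm]

lemma mapDomain_pmap_inv (σ : Equiv.Perm (Fin n)) (d : Fin m × Fin n →₀ ℕ) :
    Finsupp.mapDomain (pmap m n σ) (Finsupp.mapDomain (pmap m n σ⁻¹) d) = d := by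
  rw [← Finsupp.mapDomain_comp]
  have h1 : pmap m n σ ∘ pmap m n σ⁻¹ = id := funext fun q => by simp [pmap]
  rw [h1, Finsupp.mapDomain_id]

lemma coeff_permRename (σ : Equiv.Perm (Fin n)) (p : MvPolynomial (Fin m × Fin n) R)
    (d : Fin m × Fin n →₀ ℕ) :
    coeff d (permRename m n σ p) = coeff (Finsupp.mapDomain (pmap m n σ⁻¹) d) p := by
  have h0 : permRename m n σ p = rename (pmap m n σ) p := rfl
  rw [h0]
  conv_lhs => rw [← mapDomain_pmap_inv m n σ d]
  exact coeff_rename_mapDomain _ (pmap_injective m n σ) p _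

lemma coeff_eq_of_collate_eq (p : MvPolynomial (Fin m × Fin n) R)
    (hp : ∀ σ, permRename m n σ p = p) {d d' : Fin m × Fin n →₀ ℕ}
    (h : collate m n d = collate m n d') :
    coeff d p = coeff d' p := by
  have hcnt : ∀ b, cnt (pcols m n d) b = cnt (pcols m n d') b := by
    intro b
    by_cases hb : b = 0
    · subst hb
      have h1 := cnt_pcols_zero m n d
      have h2 := cnt_pcols_zero m n d'
      have h3 : ((collate m n d).sum fun _ v => v) = ((collate m n d').sum fun _ v => v) := by
        rw [h]
      omega
    · have h4 := DFunLike.congr_fun h (⟨b, hb⟩ : {μ : Fin m →₀ ℕ // μ ≠ 0})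
      rwa [collate_apply, collate_apply] at h4
  obtain ⟨σ, hσ⟩ := exists_perm hcnt
  have hd : d = Finsupp.mapDomain (pmap m n σ⁻¹) d' := by
    apply eq_of_pcols
    intro j
    rw [pcols_mapDomain, inv_inv]
    exact congrFun hσ j
  calc coeff d p = coeff (Finsupp.mapDomain (pmap m n σ⁻¹) d') p := by rw [hd]
    _ = coeff d' (permRename m n σ p) := (coeff_permRename m n σ p d').symm
    _ = coeff d' p := by rw [hp σ]

lemma prod_monomial {σ' : Type*} {S : Type*} [CommSemiring S] {τ : Type*} (s : Finset τ)
    (u : τ → (σ' →₀ ℕ)) (v : τ → S) :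
    ∏ x ∈ s, (monomial (u x) (v x) : MvPolynomial σ' S)
      = monomial (∑ x ∈ s, u x) (∏ x ∈ s, v x) := by
  classical
  induction s using Finset.induction_on with
  | empty => simp [monomial_zero']
  | insert _ _ ha ih =>
      rw [Finset.prod_insert ha, Finset.sum_insert ha, Finset.prod_insert ha, ih, monomial_mul]

/-- the `h`-th element of the support of `α`. -/
def μfun (α : {d : Fin m →₀ ℕ // d ≠ 0} →₀ ℕ) (h : Fin α.support.card) :
    {d : Fin m →₀ ℕ // d ≠ 0} :=
  ((α.support.equivFin.symm h) : {d : Fin m →₀ ℕ // d ≠ 0})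

lemma μfun_injective (α : {d : Fin m →₀ ℕ // d ≠ 0} →₀ ℕ) :
    Function.Injective (μfun m α) := by
  intro h h' e
  have : α.support.equivFin.symm h = α.support.equivFin.symm h' := Subtype.ext e
  exact α.support.equivFin.symm.injective this

lemma μfun_mem (α : {d : Fin m →₀ ℕ // d ≠ 0} →₀ ℕ) (h : Fin α.support.card) :
    μfun m α h ∈ α.support := (α.support.equivFin.symm h).2

lemma μfun_apply_equivFin (α : {d : Fin m →₀ ℕ // d ≠ 0} →₀ ℕ)
    {μ : {d : Fin m →₀ ℕ // d ≠ 0}} (hμ : μ ∈ α.support) :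
    μfun m α (α.support.equivFin ⟨μ, hμ⟩) = μ := by
  rw [μfun, Equiv.symm_apply_apply]

def delta (α : {d : Fin m →₀ ℕ // d ≠ 0} →₀ ℕ) (o : Option (Fin α.support.card)) :
    Fin α.support.card →₀ ℕ :=
  o.elim 0 fun h => Finsupp.single h 1

def colm (α : {d : Fin m →₀ ℕ // d ≠ 0} →₀ ℕ) (j : Fin n)
    (o : Option (Fin α.support.card)) : Fin m × Fin n →₀ ℕ :=
  o.elim 0 fun h => Finsupp.mapDomain (fun i => (i, j)) (μfun m α h).1

def dOf (α : {d : Fin m →₀ ℕ // d ≠ 0} →₀ ℕ) (g : Fin n → Option (Fin α.support.card)) :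
    Fin m × Fin n →₀ ℕ :=
  ∑ j : Fin n, colm m n α j (g j)

def cntF (α : {d : Fin m →₀ ℕ // d ≠ 0} →₀ ℕ) (g : Fin n → Option (Fin α.support.card)) :
    Fin α.support.card →₀ ℕ :=
  ∑ j : Fin n, delta m α (g j)

def βval (α : {d : Fin m →₀ ℕ // d ≠ 0} →₀ ℕ) : Fin α.support.card →₀ ℕ :=
  Finsupp.equivFunOnFinite.symm fun l => α ((α.support.equivFin.symm l) : {d : Fin m →₀ ℕ // d ≠ 0})

lemma βval_apply (α : {d : Fin m →₀ ℕ // d ≠ 0} →₀ ℕ) (h : Fin α.support.card) :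
    βval m α h = α (μfun m α h) := rfl

lemma cntF_apply (α : {d : Fin m →₀ ℕ // d ≠ 0} →₀ ℕ)
    (g : Fin n → Option (Fin α.support.card)) (h : Fin α.support.card) :
    cntF m n α g h = cnt g (some h) := by
  rw [cntF, Finsupp.finset_sum_apply, cnt, Finset.card_filter]
  refine Finset.sum_congr rfl fun j _ => ?_
  cases hgj : g j with
  | none => simp [delta]
  | some h' =>
      rw [delta]
      simp only [Option.elim_some, Finsupp.single_apply, Option.some_inj]

lemma pcols_dOf (α : {d : Fin m →₀ ℕ // d ≠ 0} →₀ ℕ)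
    (g : Fin n → Option (Fin α.support.card)) (j : Fin n) :
    pcols m n (dOf m n α g) j = (g j).elim 0 (fun h => (μfun m α h).1) := by
  ext i
  rw [pcols_apply, dOf, Finsupp.finset_sum_apply]
  rw [Finset.sum_eq_single j ?h1 (by simp)]
  case h1 =>
    intro j' _ hne
    cases hgj : g j' with
    | none => simp [colm]
    | some h =>
        rw [colm]
        simp only [Option.elim_some]
        apply Finsupp.mapDomain_notin_range
        rintro ⟨i', hi'⟩
        exact hne (by simpa using congrArg Prod.snd hi')
  · cases hgj : g j with
    | none => simp [colm]
    | some h =>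
        rw [colm]
        simp only [Option.elim_some]
        rw [show ((i, j) : Fin m × Fin n) = (fun i' => (i', j)) i from rfl,
          Finsupp.mapDomain_apply (fun a b hab => congrArg Prod.fst hab)]

lemma dOf_injective (α : {d : Fin m →₀ ℕ // d ≠ 0} →₀ ℕ) :
    Function.Injective (dOf m n α) := by
  intro g g' e
  funext j
  have h1 := pcols_dOf m n α g j
  rw [e, pcols_dOf] at h1
  cases hg : g j with
  | none =>
      cases hg' : g' j with
      | none => rfl
      | some h' =>
          rw [hg, hg'] at h1
          simp only [Option.elim_none, Option.elim_some] at h1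
          exact absurd h1 (μfun m α h').2
  | some h =>
      cases hg' : g' j with
      | none =>
          rw [hg, hg'] at h1
          simp only [Option.elim_none, Option.elim_some] at h1
          exact absurd h1.symm (μfun m α h).2
      | some h' =>
          rw [hg, hg'] at h1
          simp only [Option.elim_some] at h1
          rw [μfun_injective m α (Subtype.ext h1)]

@[simp] lemma delta_none (α : {d : Fin m →₀ ℕ // d ≠ 0} →₀ ℕ) : delta m α none = 0 := rfl
@[simp] lemma delta_some (α : {d : Fin m →₀ ℕ // d ≠ 0} →₀ ℕ) (h) :
    delta m α (some h) = Finsupp.single h 1 := rfl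
@[simp] lemma colm_none (α : {d : Fin m →₀ ℕ // d ≠ 0} →₀ ℕ) (j : Fin n) :
    colm m n α j none = 0 := rfl
@[simp] lemma colm_some (α : {d : Fin m →₀ ℕ // d ≠ 0} →₀ ℕ) (j : Fin n) (h) :
    colm m n α j (some h) = Finsupp.mapDomain (fun i => (i, j)) (μfun m α h).1 := rfl

lemma eAlphaM_eq (α : {d : Fin m →₀ ℕ // d ≠ 0} →₀ ℕ) :
    eAlphaM R m n α =
      ∑ g ∈ Finset.univ.filter
          (fun g : Fin n → Option (Fin α.support.card) => cntF m n α g = βval m α),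
        monomial (dOf m n α g) (1 : R) := by
  rw [eAlphaM, eAlpha]
  have hfac : ∀ j : Fin n,
      (1 + ∑ h : Fin α.support.card,
          X h * C (subst m n (monomial ((α.support.equivFin.symm h) :
            {d : Fin m →₀ ℕ // d ≠ 0}).1 (1 : R)) j)) =
      ∑ o : Option (Fin α.support.card),
        monomial (delta m α o) ((monomial (colm m n α j o) 1 : MvPolynomial (Fin m × Fin n) R)) := by
    intro j
    rw [Fintype.sum_option]
    have h1 : (monomial (delta m α none)
        ((monomial (colm m n α j none) 1 : MvPolynomial (Fin m × Fin n) R))) = 1 := by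
      rw [delta_none, colm_none m n α j, monomial_zero', monomial_zero', C_1, C_1]
    rw [h1]
    congr 1
    refine Finset.sum_congr rfl fun h _ => ?_
    rw [subst, rename_monomial, colm_some, delta_some, ← C_mul_X_eq_monomial, mul_comm]
    rfl
  rw [Finset.prod_congr rfl fun j _ => hfac j, Finset.prod_univ_sum, Fintype.piFinset_univ]
  have hsummand : ∀ g : Fin n → Option (Fin α.support.card),
      (∏ j : Fin n, (monomial (delta m α (g j))
          ((monomial (colm m n α j (g j)) 1 : MvPolynomial (Fin m × Fin n) R)))) =
      monomial (cntF m n α g) ((monomial (dOf m n α g) 1 : MvPolynomial (Fin m × Fin n) R)) := by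
    intro g
    rw [prod_monomial, prod_monomial]
    rw [cntF, dOf]
    simp
  rw [Finset.sum_congr rfl fun g _ => hsummand g]
  rw [coeff_sum]
  rw [Finset.sum_filter]
  refine Finset.sum_congr rfl fun g _ => ?_
  rw [coeff_monomial]
  rfl

lemma collate_dOf (α : {d : Fin m →₀ ℕ // d ≠ 0} →₀ ℕ)
    (g : Fin n → Option (Fin α.support.card)) (hg : cntF m n α g = βval m α) :
    collate m n (dOf m n α g) = α := by
  ext μ
  rw [collate_apply]
  by_cases hμ : μ ∈ α.support
  · set h := α.support.equivFin ⟨μ, hμ⟩ with hh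
    have hμf : μfun m α h = μ := μfun_apply_equivFin m α hμ
    have h1 : cnt (pcols m n (dOf m n α g)) μ.1 = cnt g (some h) := by
      refine cnt_congr _ _ fun j => ?_
      rw [pcols_dOf]
      cases hgj : g j with
      | none =>
          simp only [Option.elim_none]
          constructor
          · intro h0; exact absurd h0.symm μ.2
          · intro h0; exact absurd h0.symm (Option.some_ne_none h)
      | some h' =>
          simp only [Option.elim_some, Option.some_inj]
          constructor
          · intro h0
            have h3 : μfun m α h' = μfun m α h := by rw [hμf]; exact Subtype.ext h0
            exact μfun_injective m α h3
          · intro h0; rw [h0, hμf]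
    rw [h1, ← cntF_apply, hg, βval_apply, hμf]
  · rw [Finsupp.notMem_support_iff.mp hμ]
    apply cnt_eq_zero
    intro j
    rw [pcols_dOf]
    cases hgj : g j with
    | none =>
        simp only [Option.elim_none]
        intro h0; exact μ.2 h0.symm
    | some h' =>
        simp only [Option.elim_some]
        intro h0
        exact hμ ((Subtype.ext h0 : μfun m α h' = μ) ▸ μfun_mem m α h')

/-- reading off the coloring from an exponent whose collation is `α`. -/
def gOf (α : {d : Fin m →₀ ℕ // d ≠ 0} →₀ ℕ) (d : Fin m × Fin n →₀ ℕ) (j : Fin n) :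
    Option (Fin α.support.card) :=
  if h0 : pcols m n d j = 0 then none
  else if h1 : (⟨pcols m n d j, h0⟩ : {μ : Fin m →₀ ℕ // μ ≠ 0}) ∈ α.support
    then some (α.support.equivFin ⟨⟨pcols m n d j, h0⟩, h1⟩) else none

lemma gOf_spec (α : {d : Fin m →₀ ℕ // d ≠ 0} →₀ ℕ) (d : Fin m × Fin n →₀ ℕ)
    (hc : collate m n d = α) :
    cntF m n α (gOf m n α d) = βval m α ∧ dOf m n α (gOf m n α d) = d := by
  have hmem : ∀ (j : Fin n) (h0 : ¬ pcols m n d j = 0),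
      (⟨pcols m n d j, h0⟩ : {μ : Fin m →₀ ℕ // μ ≠ 0}) ∈ α.support := by
    intro j h0
    rw [Finsupp.mem_support_iff, ← hc, collate_apply]
    exact (cnt_pos j rfl).ne'
  have helim : ∀ j : Fin n, (gOf m n α d j).elim 0 (fun h => (μfun m α h).1) = pcols m n d j := by
    intro j
    rw [gOf]
    by_cases h0 : pcols m n d j = 0
    · rw [dif_pos h0, h0]; rfl
    · rw [dif_neg h0, dif_pos (hmem j h0)]
      simp only [Option.elim_some]
      rw [μfun_apply_equivFin]
  constructor
  · ext h
    rw [cntF_apply, βval_apply]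
    have h2 : cnt (gOf m n α d) (some h) = cnt (pcols m n d) ((μfun m α h).1) := by
      refine cnt_congr _ _ fun j => ?_
      constructor
      · intro h0
        have h3 := helim j
        rw [h0] at h3
        exact h3.symm
      · intro h0
        have h0' : ¬ pcols m n d j = 0 := by rw [h0]; exact (μfun m α h).2
        rw [gOf, dif_neg h0', dif_pos (hmem j h0')]
        refine congrArg some ?_
        rw [Equiv.apply_eq_iff_eq_symm_apply]
        exact Subtype.ext (Subtype.ext h0)
    rw [h2, ← collate_apply, hc]
  · apply eq_of_pcols
    intro j
    rw [pcols_dOf, helim]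

lemma coeff_eAlphaM (α : {d : Fin m →₀ ℕ // d ≠ 0} →₀ ℕ) (d : Fin m × Fin n →₀ ℕ) :
    coeff d (eAlphaM R m n α) = if collate m n d = α then 1 else 0 := by
  rw [eAlphaM_eq, coeff_sum]
  have h1 : ∀ g ∈ Finset.univ.filter
      (fun g : Fin n → Option (Fin α.support.card) => cntF m n α g = βval m α),
      coeff d (monomial (dOf m n α g) (1 : R)) = if dOf m n α g = d then 1 else 0 :=
    fun g _ => coeff_monomial d (dOf m n α g) 1
  rw [Finset.sum_congr rfl h1]
  by_cases hc : collate m n d = α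
  · obtain ⟨hg1, hg2⟩ := gOf_spec m n α d hc
    rw [if_pos hc]
    have hmemf : gOf m n α d ∈ Finset.univ.filter
        (fun g : Fin n → Option (Fin α.support.card) => cntF m n α g = βval m α) :=
      Finset.mem_filter.mpr ⟨Finset.mem_univ _, hg1⟩
    have hone : ∀ b ∈ Finset.univ.filter
        (fun g : Fin n → Option (Fin α.support.card) => cntF m n α g = βval m α),
        b ≠ gOf m n α d → (if dOf m n α b = d then (1 : R) else 0) = 0 := by
      intro b _ hbne
      rw [if_neg (fun he => hbne (dOf_injective m n α (he.trans hg2.symm)))]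
    rw [Finset.sum_eq_single_of_mem _ hmemf hone, if_pos hg2]
  · rw [if_neg hc]
    apply Finset.sum_eq_zero
    intro g hg
    rw [if_neg]
    intro he
    exact hc (he ▸ collate_dOf m n α g (Finset.mem_filter.mp hg).2)

lemma eAlphaM_mem_invSub (α : {d : Fin m →₀ ℕ // d ≠ 0} →₀ ℕ) :
    eAlphaM R m n α ∈ invSub R m n := by
  intro σ
  apply MvPolynomial.ext
  intro d
  rw [coeff_permRename, coeff_eAlphaM, coeff_eAlphaM, collate_mapDomain]

lemma eAlphaM_mem_comp (α : {d : Fin m →₀ ℕ // d ≠ 0} →₀ ℕ) (a : Fin m → ℕ)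
    (hw : (fun i => α.sum fun μ c => c * μ.1 i) = a) :
    eAlphaM R m n α ∈ comp R m n a := by
  intro d hd
  rw [MvPolynomial.mem_support_iff] at hd
  have hc : collate m n d = α := by
    by_contra hne
    rw [coeff_eAlphaM, if_neg hne] at hd
    exact hd rfl
  rw [← hw]
  funext i
  show (∑ j : Fin n, d (i, j)) = α.sum fun μ c => c * μ.1 i
  rw [← hc, collate_weight]

lemma exists_collate (α : {d : Fin m →₀ ℕ // d ≠ 0} →₀ ℕ)
    (hle : (α.sum fun _ v => v) ≤ n) : ∃ d, collate m n d = α := by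
  classical
  set L0 : List {d : Fin m →₀ ℕ // d ≠ 0} := (Finsupp.toMultiset α).toList with hL0
  have hlen : L0.length ≤ n := by
    rw [hL0, Multiset.length_toList, Finsupp.card_toMultiset]
    exact hle
  set cfun : Fin n → (Fin m →₀ ℕ) :=
    (fun j => if h : (j : ℕ) < L0.length then (L0.get ⟨j, h⟩).1 else 0) with hcfun
  refine ⟨Finsupp.equivFunOnFinite.symm (fun q => cfun q.2 q.1), ?_⟩
  have hcols : pcols m n (Finsupp.equivFunOnFinite.symm (fun q => cfun q.2 q.1)) = cfun := by
    funext j; ext i; rw [pcols_apply]; rfl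
  ext μ
  rw [collate_apply, hcols, hcfun]
  have h2 : cnt (fun j : Fin n => if h : (j : ℕ) < L0.length then (L0.get ⟨j, h⟩).1 else 0) μ.1
      = cnt (L0.get) μ :=
    cnt_pad₂ L0 hlen Subtype.val Subtype.val_injective 0 (fun c => c.2) μ
  rw [h2, cnt_toMultiset_get]
  convert Finsupp.count_toMultiset α μ using 2

variable (R) in
/-- the basis vectors, as elements of the submodule. -/
def bvec (a : Fin m → ℕ)
    (t : {α : {d : Fin m →₀ ℕ // d ≠ 0} →₀ ℕ //
        (α.sum fun _ v => v) ≤ n ∧ (fun i => α.sum fun μ c => c * μ.1 i) = a}) :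
    ↥(invSub R m n ⊓ comp R m n a) :=
  ⟨eAlphaM R m n t.1, Submodule.mem_inf.mpr
    ⟨eAlphaM_mem_invSub m n t.1, eAlphaM_mem_comp m n t.1 a t.2.2⟩⟩

lemma bvec_li (a : Fin m → ℕ) : LinearIndependent R (bvec R m n a) := by
  rw [linearIndependent_iff']
  intro s g hsum t hts
  have hpoly : (∑ i ∈ s, g i • eAlphaM R m n i.1) = 0 := by
    have h0 := congrArg (Subtype.val) hsum
    rw [Submodule.coe_sum] at h0
    simpa [bvec] using h0
  obtain ⟨dt, hdt⟩ := exists_collate m n t.1 t.2.1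
  have h1 := congrArg (coeff dt) hpoly
  rw [coeff_sum, coeff_zero] at h1
  have h2 : ∀ i ∈ s, coeff dt (g i • eAlphaM R m n i.1)
      = if i = t then g i else 0 := by
    intro i _
    rw [coeff_smul, coeff_eAlphaM, hdt]
    by_cases hit : i = t
    · rw [if_pos hit, if_pos (by rw [hit]), smul_eq_mul, mul_one]
    · rw [if_neg hit, if_neg (fun he => hit (Subtype.ext he.symm)), smul_zero]
  rw [Finset.sum_congr rfl h2, Finset.sum_ite_eq' s t (fun i => g i), if_pos hts] at h1
  exact h1

lemma bvec_span (a : Fin m → ℕ) :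
    ⊤ ≤ Submodule.span R (Set.range (bvec R m n a)) := by
  rintro ⟨p, hp⟩ -
  obtain ⟨hinv, hcomp⟩ := Submodule.mem_inf.mp hp
  classical
  set cf : ({d : Fin m →₀ ℕ // d ≠ 0} →₀ ℕ) → R := fun β =>
    if hb : ∃ d, collate m n d = β ∧ d ∈ p.support then coeff hb.choose p else 0 with hcf
  have cf_eq : ∀ d : Fin m × Fin n →₀ ℕ, cf (collate m n d) = coeff d p := by
    intro d
    show (if hb : ∃ d', collate m n d' = collate m n d ∧ d' ∈ p.support
      then coeff hb.choose p else 0) = coeff d p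
    by_cases hb : ∃ d', collate m n d' = collate m n d ∧ d' ∈ p.support
    · rw [dif_pos hb]
      exact coeff_eq_of_collate_eq m n p hinv hb.choose_spec.1
    · rw [dif_neg hb]
      by_contra hne
      exact hb ⟨d, rfl, MvPolynomial.mem_support_iff.mpr (fun h0 => hne (h0 ▸ rfl))⟩
  set A : Finset ({d : Fin m →₀ ℕ // d ≠ 0} →₀ ℕ) := p.support.image (collate m n) with hA
  have hprop : ∀ α : {x // x ∈ A}, ((α.1.sum fun _ v => v) ≤ n ∧
      (fun i => α.1.sum fun μ c => c * μ.1 i) = a) := by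
    intro α
    obtain ⟨d, hd1, hd2⟩ := Finset.mem_image.mp α.2
    constructor
    · rw [← hd2]; exact collate_sum_le m n d
    · funext i
      rw [← hd2, collate_weight]
      exact congrFun (hcomp d hd1) i
  have hrep : p = ∑ α ∈ A.attach, cf α.1 • eAlphaM R m n α.1 := by
    apply MvPolynomial.ext
    intro d
    rw [coeff_sum]
    have h3 : ∀ α ∈ A.attach, coeff d (cf α.1 • eAlphaM R m n α.1)
        = if collate m n d = α.1 then cf α.1 else 0 := by
      intro α _
      rw [coeff_smul, coeff_eAlphaM]
      by_cases hone : collate m n d = α.1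
      · rw [if_pos hone, if_pos hone, smul_eq_mul, mul_one]
      · rw [if_neg hone, if_neg hone, smul_zero]
    rw [Finset.sum_congr rfl h3]
    by_cases hd : collate m n d ∈ A
    · rw [Finset.sum_eq_single (⟨collate m n d, hd⟩ : {x // x ∈ A})]
      · rw [if_pos rfl, cf_eq]
      · intro b _ hbne
        rw [if_neg (fun he => hbne (Subtype.ext he.symm))]
      · intro habs
        exact absurd (Finset.mem_attach A ⟨_, hd⟩) habs
    · have h0 : coeff d p = 0 := by
        by_contra hne
        exact hd (Finset.mem_image.mpr ⟨d, MvPolynomial.mem_support_iff.mpr hne, rfl⟩)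
      rw [h0]
      symm
      apply Finset.sum_eq_zero
      intro b _
      rw [if_neg (fun he => hd (by rw [he]; exact b.2))]
  have hx2 : (⟨p, hp⟩ : ↥(invSub R m n ⊓ comp R m n a))
      = ∑ α ∈ A.attach, cf α.1 • bvec R m n a ⟨α.1, hprop α⟩ := by
    apply Subtype.ext
    rw [Submodule.coe_sum]
    simpa [bvec] using hrep
  rw [hx2]
  exact Submodule.sum_mem _ fun α _ => Submodule.smul_mem _ _
    (Submodule.subset_span ⟨⟨α.1, hprop α⟩, rfl⟩)

end Stmt8Aux

/-- for each a ∈ ℕ^m, { e_α : |α| ≤ n, ∂(e_α) = a } is an R-basis of the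
multidegree-a component A_R(n,m,a)^{Sₙ}, where ∂(e_α) = ∑_μ α(μ)∂(μ). -/
theorem stmt8 (R : Type*) [CommRing R] (m n : ℕ) (a : Fin m → ℕ) :
    ∃ b : Module.Basis {α : {d : Fin m →₀ ℕ // d ≠ 0} →₀ ℕ //
        (α.sum fun _ v => v) ≤ n ∧ (fun i => α.sum fun μ c => c * μ.1 i) = a}
        R ↥(invSub R m n ⊓ comp R m n a),
      ∀ α : {α : {d : Fin m →₀ ℕ // d ≠ 0} →₀ ℕ //
          (α.sum fun _ v => v) ≤ n ∧ (fun i => α.sum fun μ c => c * μ.1 i) = a},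
        (b α : MvPolynomial (Fin m × Fin n) R) = eAlphaM R m n α.1 := by
  refine ⟨Module.Basis.mk (Stmt8Aux.bvec_li m n a) (Stmt8Aux.bvec_span m n a), fun α => ?_⟩
  rw [Module.Basis.mk_apply]
  rfl

end
end

section
/- Product formula: for f_1,...,f_k, g_1,...,g_h ∈ A_R(m), with α ∈ ℕ^k, β ∈ ℕ^h, ∑α_i ≤ n, ∑β_j ≤ n, one has e_α(f)·e_β(g) = ∑_γ e_γ(f, g, fg), where fg = (f_i g_j)_{i,j}, and γ = (γ_{i0}, γ_{0j}, γ_{ij}) ranges over tuples of naturals with |γ| ≤ n, ∑_{j=0}^h γ_{ij} = α_i for each i, and ∑_{i=0}^k γ_{ij} = β_j for each j. -/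
open MvPolynomial Finset
open scoped Classical

noncomputable section

variable {R : Type*} [CommRing R]

/-!
Substituting `t_i ↦ s_i`, `t'_j ↦ u_j`, `t''_{ij} ↦ s_i u_j` in the generating polynomial
`∏_l (1 + ∑ t_i f_i(l) + ∑ t'_j g_j(l) + ∑ t''_{ij} f_i(l) g_j(l))` of the `e_γ(f, g, fg)` turns
each factor into `(1 + ∑ s_i f_i(l)) (1 + ∑ u_j g_j(l))`, so the result is the product of the
generating polynomials of the `e_α(f)` and of the `e_β(g)`. Comparing coefficients of `s^α u^β`:
the monomial `t^γ` goes to `s^α u^β` exactly when `γ` has the prescribed marginals `α` and `β`,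
and only `|γ| ≤ n` occurs because the generating polynomial has total degree at most `n`.
-/

section GeneratingPolynomial

variable {S : Type*} [CommSemiring S]

lemma coeff_sumElim_rename_inl_mul_rename_inr {σ τ : Type*} (p : MvPolynomial σ S)
    (q : MvPolynomial τ S) (u : σ →₀ ℕ) (v : τ →₀ ℕ) :
    coeff (u.sumElim v) (rename Sum.inl p * rename Sum.inr q) = coeff u p * coeff v q := by
  induction p using MvPolynomial.induction_on' with
  | add p₁ p₂ h₁ h₂ => simp only [map_add, add_mul, coeff_add, h₁, h₂]
  | monomial u' a =>
    induction q using MvPolynomial.induction_on' with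
    | add q₁ q₂ h₁ h₂ => simp only [map_add, mul_add, coeff_add, h₁, h₂]
    | monomial v' b =>
      have hinj : u'.sumElim v' = u.sumElim v ↔ u' = u ∧ v' = v := by
        refine ⟨fun h => ⟨?_, ?_⟩, fun h => by rw [h.1, h.2]⟩ <;> ext x
        exacts [DFunLike.congr_fun h (Sum.inl x), DFunLike.congr_fun h (Sum.inr x)]
      rw [rename_monomial, rename_monomial, monomial_mul, ← Finsupp.sumElim_eq_add,
        coeff_monomial, coeff_monomial, coeff_monomial]
      simp only [hinj]
      split_ifs <;> simp_all

lemma aeval_monomial_one_monomial {σ τ : Type*} (w : σ → τ →₀ ℕ) (c : σ →₀ ℕ) (r : S) :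
    aeval (fun x => monomial (w x) (1 : S)) (monomial c r) =
      monomial (Finsupp.linearCombination ℕ w c) r := by
  simp only [aeval_monomial, Finsupp.linearCombination_apply, monomial_finsupp_sum_index,
    algebraMap_eq, monomial_pow, one_pow]

lemma coeff_aeval_monomial_one {σ τ : Type*} [DecidableEq τ] (w : σ → τ →₀ ℕ)
    (Q : MvPolynomial σ S) (δ : τ →₀ ℕ) :
    coeff δ (aeval (fun x => monomial (w x) (1 : S)) Q) =
      ∑ c ∈ Q.support with Finsupp.linearCombination ℕ w c = δ, coeff c Q := by
  conv_lhs => rw [Q.as_sum, map_sum]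
  simp only [aeval_monomial_one_monomial, coeff_sum, coeff_monomial, Finset.sum_filter]

lemma sum_support_filter_eq_sum_piFinset_of_totalDegree_le {ι : Type*} [Fintype ι]
    [DecidableEq ι] {Q : MvPolynomial ι S} {n : ℕ} (hQ : Q.totalDegree ≤ n) (P : (ι →₀ ℕ) → Prop) [DecidablePred P] :
    ∑ c ∈ Q.support with P c, coeff c Q =
      ∑ γ ∈ (Fintype.piFinset fun _ => range (n + 1)) with
        (∑ x, γ x) ≤ n ∧ P (Finsupp.equivFunOnFinite.symm γ),
        coeff (Finsupp.equivFunOnFinite.symm γ) Q := by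
  have hdeg : ∀ c ∈ Q.support, ∑ x, c x ≤ n := fun c hc =>
    (Finsupp.sum_fintype c (fun _ e => e) fun _ => rfl) ▸ (le_totalDegree hc).trans hQ
  refine Finset.sum_bij_ne_zero (fun c _ _ => ⇑c) ?_
    (fun _ _ _ _ _ _ h => DFunLike.coe_injective h) ?_
    fun c _ _ => by rw [Finsupp.equivFunOnFinite_symm_coe]
  · intro c hc _
    obtain ⟨hcQ, hcP⟩ := Finset.mem_filter.1 hc
    rw [← Finsupp.equivFunOnFinite_symm_coe c] at hcP
    refine Finset.mem_filter.2 ⟨Fintype.mem_piFinset.2 fun x => ?_, hdeg c hcQ, hcP⟩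
    exact Finset.mem_range_succ_iff.2 ((Finset.single_le_sum (by simp) (Finset.mem_univ x)).trans
      (hdeg c hcQ))
  · intro γ hγ hne
    refine ⟨Finsupp.equivFunOnFinite.symm γ, Finset.mem_filter.2 ⟨mem_support_iff.2 hne, ?_⟩, hne,
      by simp⟩
    simpa using (Finset.mem_filter.1 hγ).2.2

variable {ι J : Type*} [Fintype ι] [Fintype J]

def genPoly (v : ι → J → S) : MvPolynomial ι S :=
  ∏ j, (1 + ∑ x, X x * C (v x j))

lemma totalDegree_genPoly_le (v : ι → J → S) : (genPoly v).totalDegree ≤ Fintype.card J := by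
  calc (genPoly v).totalDegree
        ≤ ∑ j, (1 + ∑ x, X x * C (v x j) : MvPolynomial ι S).totalDegree :=
      totalDegree_finsetProd _ _
    _ ≤ ∑ _j : J, 1 := Finset.sum_le_sum fun j _ => ?_
    _ = Fintype.card J := by simp
  refine (totalDegree_add _ _).trans (max_le (by simp) (totalDegree_finsetSum_le fun x _ => ?_))
  rw [mul_comm, C_mul_X_eq_monomial]
  exact (totalDegree_monomial_le _ _).trans (by simp)

variable {ι₁ ι₂ : Type*}

/-- The exponents of the substitution `t_i ↦ s_i`, `t'_j ↦ u_j`, `t''_{ij} ↦ s_i u_j`. -/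
def productExponent : ι₁ ⊕ ι₂ ⊕ ι₁ × ι₂ → ι₁ ⊕ ι₂ →₀ ℕ :=
  Sum.elim (fun i => .single (.inl i) 1)
    (Sum.elim (fun j => .single (.inr j) 1) fun p => .single (.inl p.1) 1 + .single (.inr p.2) 1)

lemma aeval_genPoly_sumElim [Fintype ι₁] [Fintype ι₂] (a : ι₁ → J → S) (b : ι₂ → J → S) :
    aeval (fun x => monomial (productExponent x) (1 : S))
        (genPoly (Sum.elim a (Sum.elim b fun p j => a p.1 j * b p.2 j))) =
      rename Sum.inl (genPoly a) * rename Sum.inr (genPoly b) := by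
  have hX : ∀ y : ι₁ ⊕ ι₂, monomial (.single y 1) (1 : S) = X y := fun _ => rfl
  have hXX : ∀ y z : ι₁ ⊕ ι₂, monomial (.single y 1 + .single z 1) (1 : S) = X y * X z := by
    simp [← hX, monomial_mul]
  simp only [genPoly, map_prod, ← Finset.prod_mul_distrib]
  refine Finset.prod_congr rfl fun j _ => ?_
  simp only [map_add, map_one, map_sum, map_mul, aeval_X, aeval_C, rename_X, rename_C,
    algebraMap_eq, Fintype.sum_sum_type, Fintype.sum_prod_type, Sum.elim_inl, Sum.elim_inr,
    productExponent, hX, hXX]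
  have hcross : (∑ i, X (.inl i) * C (a i j)) * (∑ i, X (.inr i) * C (b i j)) =
      ∑ i, ∑ i', X (.inl i) * X (.inr i') *
        (C (a i j) * C (b i' j) : MvPolynomial (ι₁ ⊕ ι₂) S) := by
    rw [Finset.sum_mul_sum]
    exact Finset.sum_congr rfl fun _ _ => Finset.sum_congr rfl fun _ _ => by ring
  rw [← hcross]
  ring

lemma linearCombination_productExponent_eq_sumElim_iff [Fintype ι₁] [Fintype ι₂]
    (c : ι₁ ⊕ ι₂ ⊕ ι₁ × ι₂ →₀ ℕ) (u : ι₁ →₀ ℕ) (v : ι₂ →₀ ℕ) :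
    Finsupp.linearCombination ℕ productExponent c = u.sumElim v ↔
      (∀ i, c (.inl i) + ∑ j, c (.inr (.inr (i, j))) = u i) ∧
        ∀ j, c (.inr (.inl j)) + ∑ i, c (.inr (.inr (i, j))) = v j := by
  rw [Finsupp.ext_iff, Sum.forall]
  simp [Finsupp.linearCombination_apply, Finsupp.sum_fintype,
    Fintype.sum_sum_type, Fintype.sum_prod_type, productExponent, Finsupp.single_apply]

end GeneratingPolynomial

lemma eAlpha_eq_coeff_genPoly (m n : ℕ) {ι : Type*} [Fintype ι]
    (f : ι → MvPolynomial (Fin m) R) (α : ι → ℕ) :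
    eAlpha m n f α =
      coeff (Finsupp.equivFunOnFinite.symm α) (genPoly fun x j => subst m n (f x) j) :=
  rfl

theorem stmt9_general (R : Type*) [CommRing R] (m n k h : ℕ)
    (f : Fin k → MvPolynomial (Fin m) R) (g : Fin h → MvPolynomial (Fin m) R)
    (α : Fin k → ℕ) (β : Fin h → ℕ) :
    eAlpha m n f α * eAlpha m n g β =
      ∑ γ ∈ (Fintype.piFinset fun _ : Fin k ⊕ Fin h ⊕ Fin k × Fin h =>
            Finset.range (n + 1)).filter
          (fun γ : Fin k ⊕ Fin h ⊕ Fin k × Fin h → ℕ =>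
            (∑ x, γ x) ≤ n ∧
            (∀ i : Fin k, γ (Sum.inl i) + ∑ j : Fin h, γ (Sum.inr (Sum.inr (i, j))) = α i) ∧
            (∀ j : Fin h, γ (Sum.inr (Sum.inl j)) + ∑ i : Fin k, γ (Sum.inr (Sum.inr (i, j))) = β j)),
        eAlpha m n (Sum.elim f (Sum.elim g fun p => f p.1 * g p.2)) γ := by
  have hF : (fun x j => subst m n (Sum.elim f (Sum.elim g fun p => f p.1 * g p.2) x) j) =
      Sum.elim (fun x j => subst m n (f x) j)
        (Sum.elim (fun x j => subst m n (g x) j) fun (p : Fin k × Fin h) j =>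
          subst m n (f p.1) j * subst m n (g p.2) j) := by
    funext x j
    rcases x with x | x | p <;> simp [subst]
  simp only [eAlpha_eq_coeff_genPoly, hF]
  rw [← coeff_sumElim_rename_inl_mul_rename_inr, ← aeval_genPoly_sumElim,
    coeff_aeval_monomial_one, sum_support_filter_eq_sum_piFinset_of_totalDegree_le
      ((totalDegree_genPoly_le _).trans_eq (Fintype.card_fin n))]
  refine Finset.sum_congr (Finset.filter_congr fun γ _ => ?_) fun _ _ => rfl
  simp only [linearCombination_productExponent_eq_sumElim_iff, Finsupp.coe_equivFunOnFinite_symm]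

/-- product formula: e_α(f)·e_β(g) = ∑_γ e_γ(f,g,fg), where γ ranges over
tuples (γ_{i0},γ_{0j},γ_{ij}) with |γ| ≤ n, ∑_{j=0}^h γ_{ij} = α_i and
∑_{i=0}^k γ_{ij} = β_j. -/
theorem stmt9 (R : Type*) [CommRing R] (m n k h : ℕ)
    (f : Fin k → MvPolynomial (Fin m) R) (g : Fin h → MvPolynomial (Fin m) R)
    (α : Fin k → ℕ) (β : Fin h → ℕ) (hα : ∑ i, α i ≤ n) (hβ : ∑ j, β j ≤ n) :
    eAlpha m n f α * eAlpha m n g β =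
      ∑ γ ∈ (Fintype.piFinset fun _ : Fin k ⊕ Fin h ⊕ Fin k × Fin h =>
            Finset.range (n + 1)).filter
          (fun γ : Fin k ⊕ Fin h ⊕ Fin k × Fin h → ℕ =>
            (∑ x, γ x) ≤ n ∧
            (∀ i : Fin k, γ (Sum.inl i) + ∑ j : Fin h, γ (Sum.inr (Sum.inr (i, j))) = α i) ∧
            (∀ j : Fin h, γ (Sum.inr (Sum.inl j)) + ∑ i : Fin k, γ (Sum.inr (Sum.inr (i, j))) = β j)),
        eAlpha m n (Sum.elim f (Sum.elim g fun p => f p.1 * g p.2)) γ :=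
  stmt9_general R m n k h f g α β

end
end

section
/- Every multisymmetric function e_{(α_1,...,α_k)}(a_1,...,a_k) belongs to the subring of A_R(n,m)^{S_n} generated by the elements e_i(μ) for 1 ≤ i ≤ n, where μ ranges over the monomials in a_1,...,a_k. -/
open MvPolynomial Finset
open scoped Classical

noncomputable section

variable {R : Type*} [CommRing R]

/-!
Write `e_α(x)` as a sum over words `φ : Fin n → Option ι` containing the letter `h` exactly `α h`
times. Expanding `∏_h e_{α_h}(x_h)` instead gives a sum over choices of a subset `ψ j ⊆ ι` at each
point `j`; reading a nonempty `ψ j` as a letter of the alphabet of nonempty subsets `T`, with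
`x_T = ∏_{h ∈ T} x_h`, and `∅` as a blank, this is `∑_γ e_γ((x_T)_T)` over all `γ` with
`∑_{T ∋ h} γ_T = α_h`. The `γ` concentrated on singletons contributes `e_α(x)`, and every other
`γ` has `∑ γ < ∑ α`. The `x_T` are again monomials in `x`, so strong induction on `∑ α` puts
`e_α(x)` in the ring generated by the `e_i(μ)`.
-/

section MultisymmetricFunctions

variable {S : Type*} [CommRing S] {n : ℕ} {ι : Type*}

def letterCount (φ : Fin n → Option ι) (h : ι) : ℕ := #{j | φ j = some h}

def wordWeight (x : ι → Fin n → S) (φ : Fin n → Option ι) : S :=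
  ∏ j, (φ j).elim 1 (x · j)

theorem letterCount_map {κ : Type*} (e : ι ↪ κ) (φ : Fin n → Option ι) :
    letterCount (fun j => (φ j).map e) = Function.extend e (letterCount φ) 0 := by
  funext T
  by_cases hT : ∃ h, e h = T
  · obtain ⟨h, rfl⟩ := hT
    simp [letterCount, e.injective.extend_apply]
  · rw [Function.extend_apply' _ _ _ hT]
    simp only [letterCount, Pi.zero_apply, Finset.card_eq_zero, Finset.filter_eq_empty_iff,
      Option.map_eq_some_iff, not_exists, not_and]
    exact fun _ _ h _ he => hT ⟨h, he⟩

def singletonEmb : ι ↪ {T : Finset ι // T ≠ ∅} :=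
  ⟨fun h => ⟨{h}, Finset.singleton_ne_empty h⟩, fun _ _ hab => by simpa using hab⟩

@[simp]
theorem coe_singletonEmb (h : ι) : (singletonEmb h).1 = {h} := rfl

theorem singletonEmb_eq_iff {h : ι} {T : {T : Finset ι // T ≠ ∅}} (hT : #T.1 = 1) :
    singletonEmb h = T ↔ h ∈ T.1 := by
  obtain ⟨h', hh'⟩ := Finset.card_eq_one.1 hT
  simp [Subtype.ext_iff, hh', eq_comm]

variable [Fintype ι]

def multiEsymm (x : ι → Fin n → S) (α : ι → ℕ) : S :=
  ∑ φ with letterCount φ = α, wordWeight x φ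

theorem coeff_prod_one_add_sum_X_mul_C (x : ι → Fin n → S) (α : ι → ℕ) :
    coeff (Finsupp.equivFunOnFinite.symm α) (∏ j, (1 + ∑ h, X h * C (x h j))) =
      multiEsymm x α := by
  have hfactor (j : Fin n) : 1 + ∑ h, X h * C (x h j) =
      ∑ o : Option ι, monomial (o.elim 0 (Finsupp.single · 1)) (o.elim 1 (x · j)) := by
    simp [Fintype.sum_option, mul_comm (X _), C_mul_X_eq_monomial]
  have hexp (φ : Fin n → Option ι) :
      ∑ j, (φ j).elim 0 (Finsupp.single · 1) = Finsupp.equivFunOnFinite.symm α ↔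
        letterCount φ = α := by
    rw [← Equiv.apply_eq_iff_eq Finsupp.equivFunOnFinite, Equiv.apply_symm_apply]
    refine Eq.congr_left (funext fun h => ?_)
    simp only [Finsupp.equivFunOnFinite_apply, Finsupp.finsetSum_apply, letterCount,
      Finset.card_filter]
    refine Finset.sum_congr rfl fun j _ => ?_
    cases φ j <;> simp [Finsupp.single_apply]
  simp_rw [hfactor, Finset.prod_univ_sum, Fintype.piFinset_univ, ← monomial_sum_prod,
    coeff_sum, coeff_monomial, hexp, ← Finset.sum_filter]
  rfl

theorem multiEsymm_extend {κ : Type*} [Fintype κ] (e : ι ↪ κ) (y : κ → Fin n → S)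
    (α : ι → ℕ) : multiEsymm y (Function.extend e α 0) = multiEsymm (fun h => y (e h)) α := by
  have hrange {φ : Fin n → Option κ} (hφ : letterCount φ = Function.extend e α 0) (j : Fin n) :
      ((φ j).bind (Function.partialInv e)).map e = φ j := by
    rcases hj : φ j with _ | T
    · rfl
    obtain ⟨h, rfl⟩ : ∃ h, e h = T := by
      by_contra hT
      have hcount := congrFun hφ T
      rw [Function.extend_apply' _ _ _ hT, letterCount, Pi.zero_apply,
        Finset.card_eq_zero, Finset.filter_eq_empty_iff] at hcount
      exact hcount (Finset.mem_univ j) hj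
    simp [Function.partialInv_left e.injective]
  symm
  refine Finset.sum_nbij' (fun φ j => (φ j).map e)
    (fun φ j => (φ j).bind (Function.partialInv e)) ?_ ?_ ?_ ?_ ?_
  · intro φ hφ
    simp_all [letterCount_map]
  · intro φ hφ
    simp only [Finset.mem_filter, Finset.mem_univ, true_and] at hφ ⊢
    have hext := letterCount_map e fun j => (φ j).bind (Function.partialInv e)
    simp only [hrange hφ, hφ] at hext
    funext h
    simpa [e.injective.extend_apply] using (congrFun hext (e h)).symm
  · intro φ _
    funext j
    dsimp only
    cases φ j <;> simp [Function.partialInv_left e.injective]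
  · intro φ hφ
    funext j
    exact hrange (by simpa using hφ) j
  · intro φ _
    refine Finset.prod_congr rfl fun j _ => ?_
    dsimp only
    cases φ j <;> rfl

theorem prod_esymVal_eq_sum_subsets (x : ι → Fin n → S) (α : ι → ℕ) :
    ∏ h, esymVal n (x h) (α h) =
      ∑ ψ : Fin n → Finset ι with ∀ h, #{j | h ∈ ψ j} = α h, ∏ j, ∏ h ∈ ψ j, x h j := by
  simp only [esymVal, Finset.prod_univ_sum]
  refine Finset.sum_nbij' (fun A j => {h | j ∈ A h}) (fun ψ h => {j | h ∈ ψ j})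
    ?_ ?_ ?_ ?_ ?_
  · intro A hA
    simp_all [Fintype.mem_piFinset, Finset.mem_powersetCard]
  · intro ψ hψ
    simp_all [Fintype.mem_piFinset, Finset.mem_powersetCard]
  · intro A _; ext; simp
  · intro ψ _; ext; simp
  · intro A _
    simp only [Finset.prod_filter]
    rw [Finset.prod_comm]
    simp [Finset.prod_ite_mem]

def prodFamily (x : ι → Fin n → S) (T : {T : Finset ι // T ≠ ∅}) : Fin n → S := ∏ h ∈ T.1, x h

def spread (γ : {T : Finset ι // T ≠ ∅} → ℕ) (h : ι) : ℕ := ∑ T with h ∈ T.1, γ T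

theorem card_filter_mem_optionSubtypeNe (φ : Fin n → Option {T : Finset ι // T ≠ ∅}) (h : ι) :
    #{j | h ∈ Equiv.optionSubtypeNe ∅ (φ j)} = spread (letterCount φ) h := by
  simp only [spread, letterCount, Finset.card_filter]
  rw [Finset.sum_comm]
  refine Finset.sum_congr rfl fun j _ => ?_
  cases φ j <;> simp

theorem prod_esymVal_eq_sum_words (x : ι → Fin n → S) (α : ι → ℕ) :
    ∏ h, esymVal n (x h) (α h) =
      ∑ φ with spread (letterCount φ) = α, wordWeight (prodFamily x) φ := by
  rw [prod_esymVal_eq_sum_subsets, Finset.sum_filter, Finset.sum_filter]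
  symm
  refine Fintype.sum_equiv (Equiv.piCongrRight fun _ => Equiv.optionSubtypeNe ∅) _ _
    fun φ => ?_
  simp only [Equiv.piCongrRight_apply, Pi.map_apply, card_filter_mem_optionSubtypeNe,
    ← funext_iff]
  congr 1
  refine Finset.prod_congr rfl fun j _ => ?_
  cases φ j <;> simp [prodFamily]

theorem spread_extend_singletonEmb (α : ι → ℕ) :
    spread (Function.extend singletonEmb α 0) = α := by
  funext h
  rw [spread, Finset.sum_eq_single (singletonEmb h)]
  · exact singletonEmb.injective.extend_apply _ _ _
  · intro T hT hne
    rw [Function.extend_apply' _ _ _ ?_, Pi.zero_apply]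
    rintro ⟨h', rfl⟩
    simp_all
  · simp

theorem sum_lt_sum_spread (γ : {T : Finset ι // T ≠ ∅} → ℕ)
    (hγ : γ ≠ Function.extend singletonEmb (spread γ) 0) :
    ∑ T, γ T < ∑ h, spread γ h := by
  have hdouble : ∑ h, spread γ h = ∑ T, #T.1 * γ T := by
    simp only [spread, Finset.sum_filter]
    rw [Finset.sum_comm]
    simp [Finset.sum_ite_mem]
  have hcard_pos (T : {T : Finset ι // T ≠ ∅}) : 0 < #T.1 :=
    Finset.card_pos.2 (Finset.nonempty_iff_ne_empty.2 T.2)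
  rw [hdouble]
  refine Finset.sum_lt_sum (fun T _ => Nat.le_mul_of_pos_left _ (hcard_pos T)) ?_
  by_contra! hsmall
  have hcard (T) (hT : γ T ≠ 0) : #T.1 = 1 :=
    le_antisymm (Nat.le_of_mul_le_mul_right (by simpa using hsmall T (Finset.mem_univ T))
      (Nat.pos_of_ne_zero hT)) (hcard_pos T)
  refine hγ (funext fun T => ?_)
  by_cases hT : ∃ h, singletonEmb h = T
  · obtain ⟨h, rfl⟩ := hT
    rw [singletonEmb.injective.extend_apply, spread, Finset.sum_eq_single (singletonEmb h)]
    · intro T' hT' hne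
      by_contra hT'0
      exact hne ((singletonEmb_eq_iff (hcard T' hT'0)).2 (Finset.mem_filter.1 hT').2).symm
    · simp
  · rw [Function.extend_apply' _ _ _ hT, Pi.zero_apply]
    by_contra hT0
    obtain ⟨h, hh⟩ := Finset.card_pos.1 (hcard_pos T)
    exact hT ⟨h, (singletonEmb_eq_iff (hcard T hT0)).2 hh⟩

theorem sum_wordWeight_mem {κ : Type*} [Fintype κ] {A : Subring S} (y : κ → Fin n → S)
    (Q : (κ → ℕ) → Prop) (hQ : ∀ γ, Q γ → multiEsymm y γ ∈ A) :
    ∑ φ with Q (letterCount φ), wordWeight y φ ∈ A := by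
  rw [← Finset.sum_fiberwise_of_maps_to fun φ hφ => Finset.mem_image_of_mem letterCount hφ]
  refine sum_mem fun γ hγ => ?_
  obtain ⟨φ, hφ, rfl⟩ := Finset.mem_image.1 hγ
  have hQφ := (Finset.mem_filter.1 hφ).2
  convert hQ _ hQφ using 1
  rw [multiEsymm, Finset.filter_filter]
  refine Finset.sum_congr (Finset.filter_congr fun ψ _ => ?_) fun _ _ => rfl
  exact and_iff_right_of_imp fun h => h ▸ hQφ

theorem prod_esymVal_eq_multiEsymm_add (x : ι → Fin n → S) (α : ι → ℕ) :
    ∏ h, esymVal n (x h) (α h) = multiEsymm x α +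
      ∑ φ with spread (letterCount φ) = α ∧ letterCount φ ≠ Function.extend singletonEmb α 0,
        wordWeight (prodFamily x) φ := by
  rw [prod_esymVal_eq_sum_words, ← Finset.sum_filter_add_sum_filter_not _
    (fun φ => letterCount φ = Function.extend singletonEmb α 0), Finset.filter_filter,
    Finset.filter_filter]
  congr 1
  have hsingle := multiEsymm_extend singletonEmb (prodFamily x) α
  simp only [prodFamily, coe_singletonEmb, Finset.prod_singleton] at hsingle
  rw [← hsingle, multiEsymm]
  refine Finset.sum_congr (Finset.filter_congr fun φ _ => ?_) fun _ _ => rfl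
  exact and_iff_right_of_imp fun h => h ▸ spread_extend_singletonEmb α

theorem multiEsymm_mem {M : Submonoid (Fin n → S)} {A : Subring S}
    (hM : ∀ μ ∈ M, ∀ i, esymVal n μ i ∈ A) (x : ι → Fin n → S) (hx : ∀ h, x h ∈ M)
    (α : ι → ℕ) : multiEsymm x α ∈ A := by
  obtain ⟨N, hN⟩ : ∃ N, ∑ h, α h = N := ⟨_, rfl⟩
  induction N using Nat.strong_induction_on generalizing ι with
  | _ N ih =>
    have hprod : ∏ h, esymVal n (x h) (α h) ∈ A := prod_mem fun h _ => hM _ (hx h) _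
    have hrest := sum_wordWeight_mem (A := A) (prodFamily x)
      (fun γ => spread γ = α ∧ γ ≠ Function.extend singletonEmb α 0) fun γ ⟨hspread, hne⟩ =>
      ih _ (hN ▸ hspread ▸ sum_lt_sum_spread γ (hspread ▸ hne)) (prodFamily x)
        (fun T => prod_mem fun h _ => hx h) γ rfl
    simpa [prod_esymVal_eq_multiEsymm_add] using sub_mem hprod hrest

theorem esymVal_zero (v : Fin n → S) : esymVal n v 0 = 1 := by
  simp [esymVal]

theorem esymVal_eq_zero_of_lt (v : Fin n → S) {i : ℕ} (hi : n < i) : esymVal n v i = 0 := by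
  rw [esymVal, Finset.powersetCard_eq_empty.2 (by rwa [Finset.card_univ, Fintype.card_fin]),
    Finset.sum_empty]

theorem esymVal_one (i : ℕ) : esymVal n (1 : Fin n → S) i = n.choose i := by
  simp [esymVal]

end MultisymmetricFunctions

theorem eAlpha_eq_multiEsymm {m n : ℕ} {ι : Type*} [Fintype ι] (f : ι → MvPolynomial (Fin m) R)
    (α : ι → ℕ) : eAlpha m n f α = multiEsymm (fun h j => subst m n (f h) j) α :=
  coeff_prod_one_add_sum_X_mul_C _ α

theorem stmt11_general (R : Type*) [CommRing R] (m n k : ℕ)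
    (a : Fin k → MvPolynomial (Fin m) R) (α : Fin k → ℕ) :
    eAlpha m n a α ∈ Algebra.adjoin R
      {q : MvPolynomial (Fin m × Fin n) R | ∃ i : ℕ, 1 ≤ i ∧ i ≤ n ∧
        ∃ c : Fin k → ℕ, c ≠ 0 ∧
          q = esymVal n (fun j => subst m n (∏ l : Fin k, a l ^ c l) j) i} := by
  let x (l : Fin k) (j : Fin n) := subst m n (a l) j
  have hmonomial (c : Fin k → ℕ) : ∏ l, x l ^ c l = fun j => subst m n (∏ l, a l ^ c l) j := by
    funext j
    simp [x, subst, Finset.prod_apply]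
  rw [eAlpha_eq_multiEsymm, ← Subalgebra.mem_toSubring]
  refine multiEsymm_mem (M := Submonoid.closure (Set.range x))
    (A := (Algebra.adjoin R _).toSubring) ?_ x (fun l => Submonoid.subset_closure ⟨l, rfl⟩) α
  intro μ hμ i
  obtain ⟨c, rfl⟩ := Submonoid.mem_closure_range_iff_of_fintype.1 hμ
  rcases Nat.eq_zero_or_pos i with rfl | hi
  · simp [esymVal_zero]
  rcases lt_or_ge n i with hin | hin
  · simp [esymVal_eq_zero_of_lt _ hin]
  rcases eq_or_ne c 0 with rfl | hc
  · simp [esymVal_one]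
  exact Algebra.subset_adjoin ⟨i, hi, hin, c, hc, by rw [hmonomial]⟩

/-- every e_{(α₁,…,α_k)}(a₁,…,a_k) lies in the subring of A_R(n,m)^{Sₙ}
generated by the eᵢ(μ), 1 ≤ i ≤ n, μ a monomial in a₁,…,a_k. -/
theorem stmt11 (R : Type*) [CommRing R] (m n k : ℕ)
    (a : Fin k → MvPolynomial (Fin m) R) (α : Fin k → ℕ) (hα : ∑ i, α i ≤ n) :
    eAlpha m n a α ∈ Algebra.adjoin R
      {q : MvPolynomial (Fin m × Fin n) R | ∃ i : ℕ, 1 ≤ i ∧ i ≤ n ∧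
        ∃ c : Fin k → ℕ, c ≠ 0 ∧
          q = esymVal n (fun j => subst m n (∏ l : Fin k, a l ^ c l) j) i} :=
  stmt11_general R m n k a α

end
end

section
/- For every f ∈ A_R(m) and all h,k ∈ ℕ, the element e_h(f^k) belongs to the subring of A_R(n,m)^{S_n} generated by the elements e_j(f), j = 1,...,n. -/
open MvPolynomial Finset
open scoped Classical

noncomputable section

variable {R : Type*} [CommRing R]

lemma esymVal_eq_aeval {R : Type*} [CommRing R] {S : Type*} [CommRing S] [Algebra R S]
    (n : ℕ) (v : Fin n → S) (k : ℕ) :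
    esymVal n v k = aeval v (esymm (Fin n) R k) := by
  simp [esymVal, esymm, map_sum]

/-- for every f ∈ A_R(m) and h,k ∈ ℕ, e_h(f^k) belongs to the subring of
A_R(n,m)^{Sₙ} generated by e₁(f),…,eₙ(f). -/
theorem stmt13 (R : Type*) [CommRing R] (m n : ℕ)
    (f : MvPolynomial (Fin m) R) (h k : ℕ) :
    esymVal n (fun j => subst m n (f ^ k) j) h ∈ Algebra.adjoin R
      {q : MvPolynomial (Fin m × Fin n) R | ∃ j : ℕ, 1 ≤ j ∧ j ≤ n ∧
        q = esymVal n (fun i => subst m n f i) j} := by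
  set v : Fin n → MvPolynomial (Fin m × Fin n) R := fun j => subst m n f j with hv
  set Q : MvPolynomial (Fin n) R :=
    aeval (fun j : Fin n => (X j : MvPolynomial (Fin n) R) ^ k) (esymm (Fin n) R h) with hQ
  have hQsym : Q.IsSymmetric := by
    intro σ
    rw [hQ]
    rw [show (rename σ) (aeval (fun j : Fin n => (X j : MvPolynomial (Fin n) R) ^ k)
        (esymm (Fin n) R h)) = aeval (fun j : Fin n => (X (σ j) : MvPolynomial (Fin n) R) ^ k)
        (esymm (Fin n) R h) by
      rw [← AlgHom.comp_apply, comp_aeval]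
      simp]
    have := esymm_isSymmetric (Fin n) R h σ
    conv_rhs => rw [← this, aeval_rename]
    rfl
  obtain ⟨p, hp⟩ := esymmAlgHom_surjective (σ := Fin n) R (le_of_eq (Fintype.card_fin n))
    ⟨Q, hQsym⟩
  have hQp : Q = aeval (fun i : Fin n => esymm (Fin n) R (i + 1)) p := by
    rw [← esymmAlgHom_apply, hp]
  have key : esymVal n (fun j => subst m n (f ^ k) j) h = aeval v Q := by
    rw [hQ, ← AlgHom.comp_apply, comp_aeval, esymVal_eq_aeval (R := R)]
    exact congrArg (fun g => aeval g (esymm (Fin n) R h))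
      (funext fun j => by simp [subst, hv, map_pow])
  rw [key, hQp, ← AlgHom.comp_apply, comp_aeval]
  have : Set.range (fun i : Fin n => aeval v (esymm (Fin n) R (i + 1))) ⊆
      {q : MvPolynomial (Fin m × Fin n) R | ∃ j : ℕ, 1 ≤ j ∧ j ≤ n ∧
        q = esymVal n (fun i => subst m n f i) j} := by
    rintro _ ⟨i, rfl⟩
    exact ⟨i + 1, Nat.succ_le_succ (Nat.zero_le _), Nat.succ_le_of_lt i.2,
      (esymVal_eq_aeval (R := R) n v (i + 1)).symm⟩
  refine Algebra.adjoin_mono this ?_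
  rw [Algebra.adjoin_range_eq_range_aeval]
  exact ⟨p, rfl⟩

end
end

section
/- The ring of multisymmetric functions A_R(n,m)^{S_n} is generated as an R-algebra by the elements e_k(μ), where μ runs over the primitive monomials of positive degree in y_1,...,y_m and 1 ≤ k ≤ n. -/
open MvPolynomial Finset
open scoped Classical

noncomputable section

variable {R : Type*} [CommRing R]

namespace Rydh

variable {R : Type*} [CommRing R] {m n : ℕ}

/-- the action of `σ` on exponents. -/
def act (m n : ℕ) (σ : Equiv.Perm (Fin n)) (d : Fin m × Fin n →₀ ℕ) : Fin m × Fin n →₀ ℕ :=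
  Finsupp.equivMapDomain (Equiv.prodCongr (Equiv.refl (Fin m)) σ) d

lemma act_apply (σ : Equiv.Perm (Fin n)) (d : Fin m × Fin n →₀ ℕ) (i : Fin m) (j : Fin n) :
    act m n σ d (i, j) = d (i, σ⁻¹ j) := rfl

lemma act_apply' (σ : Equiv.Perm (Fin n)) (d : Fin m × Fin n →₀ ℕ) (q : Fin m × Fin n) :
    act m n σ d q = d (q.1, σ⁻¹ q.2) := by
  obtain ⟨i, j⟩ := q; exact act_apply σ d i j

lemma act_act (σ τ : Equiv.Perm (Fin n)) (d : Fin m × Fin n →₀ ℕ) :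
    act m n σ (act m n τ d) = act m n (σ * τ) d := by
  ext q
  rw [act_apply', act_apply', act_apply']
  simp [mul_inv_rev]

lemma act_one (d : Fin m × Fin n →₀ ℕ) : act m n 1 d = d := by
  ext q
  rw [act_apply']
  simp

lemma act_injective (σ : Equiv.Perm (Fin n)) :
    Function.Injective (act m n σ) := by
  intro a b h
  have := congrArg (act m n σ⁻¹) h
  rwa [act_act, act_act, inv_mul_cancel, act_one, act_one] at this

lemma act_add (σ : Equiv.Perm (Fin n)) (a b : Fin m × Fin n →₀ ℕ) :
    act m n σ (a + b) = act m n σ a + act m n σ b := by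
  ext q
  simp [act_apply']

lemma permRename_monomial (σ : Equiv.Perm (Fin n)) (d : Fin m × Fin n →₀ ℕ) (r : R) :
    permRename m n σ (monomial d r) = monomial (act m n σ d) r := by
  have h : act m n σ d = Finsupp.mapDomain (fun q : Fin m × Fin n => (q.1, σ q.2)) d := by
    rw [act, Finsupp.equivMapDomain_eq_mapDomain]
    rfl
  show rename _ (monomial d r) = _
  rw [rename_monomial, h]

lemma coeff_permRename (σ : Equiv.Perm (Fin n)) (p : MvPolynomial (Fin m × Fin n) R)
    (d : Fin m × Fin n →₀ ℕ) :
    coeff (act m n σ d) (permRename m n σ p) = coeff d p := by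
  have hinj : Function.Injective (fun q : Fin m × Fin n => (q.1, σ q.2)) := by
    intro a b h
    have h1 := congrArg Prod.fst h
    have h2 := σ.injective (congrArg Prod.snd h)
    exact Prod.ext h1 h2
  have h : act m n σ d = Finsupp.mapDomain (fun q : Fin m × Fin n => (q.1, σ q.2)) d := by
    rw [act, Finsupp.equivMapDomain_eq_mapDomain]
    rfl
  have hkey := coeff_rename_mapDomain _ hinj p d
  show coeff _ (rename _ p) = coeff d p
  rw [h]
  exact hkey

lemma coeff_invariant {p : MvPolynomial (Fin m × Fin n) R}
    (hp : ∀ σ, permRename m n σ p = p) (σ : Equiv.Perm (Fin n)) (d : Fin m × Fin n →₀ ℕ) :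
    coeff (act m n σ d) p = coeff d p := by
  conv_lhs => rw [← hp σ]
  exact coeff_permRename σ p d

/-- the orbit of an exponent. -/
def orb (m n : ℕ) (d : Fin m × Fin n →₀ ℕ) : Finset (Fin m × Fin n →₀ ℕ) :=
  Finset.image (fun σ : Equiv.Perm (Fin n) => act m n σ d) Finset.univ

lemma mem_orb {d d' : Fin m × Fin n →₀ ℕ} :
    d' ∈ orb m n d ↔ ∃ σ, act m n σ d = d' := by simp [orb]

lemma self_mem_orb (d : Fin m × Fin n →₀ ℕ) : d ∈ orb m n d :=
  mem_orb.2 ⟨1, act_one d⟩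

lemma image_act_orb (σ : Equiv.Perm (Fin n)) (d : Fin m × Fin n →₀ ℕ) :
    (orb m n d).image (act m n σ) = orb m n d := by
  ext d'
  simp only [Finset.mem_image]
  constructor
  · rintro ⟨e, he, rfl⟩
    obtain ⟨τ, rfl⟩ := mem_orb.1 he
    exact mem_orb.2 ⟨σ * τ, (act_act σ τ d).symm⟩
  · rintro hd'
    obtain ⟨τ, rfl⟩ := mem_orb.1 hd'
    exact ⟨act m n (σ⁻¹ * τ) d, mem_orb.2 ⟨σ⁻¹ * τ, rfl⟩, by rw [act_act, mul_inv_cancel_left]⟩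

/-- orbit sum. -/
def Osum (R : Type*) [CommRing R] (m n : ℕ) (d : Fin m × Fin n →₀ ℕ) :
    MvPolynomial (Fin m × Fin n) R :=
  ∑ d' ∈ orb m n d, monomial d' (1 : R)

lemma coeff_Osum (d d'' : Fin m × Fin n →₀ ℕ) :
    coeff d'' (Osum R m n d) = if d'' ∈ orb m n d then 1 else 0 := by
  rw [Osum, coeff_sum]
  simp_rw [coeff_monomial]
  exact Finset.sum_ite_eq' (orb m n d) d'' (fun _ => (1 : R))

lemma Osum_invariant (σ : Equiv.Perm (Fin n)) (d : Fin m × Fin n →₀ ℕ) :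
    permRename m n σ (Osum R m n d) = Osum R m n d := by
  rw [Osum, map_sum]
  simp_rw [permRename_monomial]
  have himg := Finset.sum_image (f := fun e => monomial e (1 : R)) (g := act m n σ)
    (s := orb m n d) (fun x _ y _ h => act_injective σ h)
  rw [← himg, image_act_orb]

/-- an invariant polynomial whose support orbit sums lie in a subalgebra lies in it too. -/
lemma key_span {A : Subalgebra R (MvPolynomial (Fin m × Fin n) R)} :
    ∀ N (p : MvPolynomial (Fin m × Fin n) R), p.support.card ≤ N →
      (∀ σ, permRename m n σ p = p) →
      (∀ d ∈ p.support, Osum R m n d ∈ A) → p ∈ A := by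
  intro N
  induction N with
  | zero =>
    intro p h _ _
    rw [Nat.le_zero, Finset.card_eq_zero, MvPolynomial.support_eq_empty] at h
    rw [h]
    exact zero_mem _
  | succ N IH =>
    intro p hcard hp hO
    by_cases h0 : p = 0
    · rw [h0]
      exact zero_mem _
    obtain ⟨d, hd⟩ := MvPolynomial.support_nonempty.2 h0
    set c := coeff d p with hc
    set q := p - C c * Osum R m n d with hqdef
    have hq : ∀ d'', coeff d'' q = if d'' ∈ orb m n d then 0 else coeff d'' p := by
      intro d''
      rw [hqdef, coeff_sub, coeff_C_mul, coeff_Osum]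
      split_ifs with h
      · obtain ⟨σ, rfl⟩ := mem_orb.1 h
        rw [coeff_invariant hp, mul_one, ← hc, sub_self]
      · rw [mul_zero, sub_zero]
    have hsupp : q.support ⊆ p.support.erase d := by
      intro d'' h''
      have hne := MvPolynomial.mem_support_iff.1 h''
      rw [hq] at hne
      by_cases horb : d'' ∈ orb m n d
      · simp [horb] at hne
      · rw [if_neg horb] at hne
        exact Finset.mem_erase.2 ⟨fun he => horb (he ▸ self_mem_orb d),
          MvPolynomial.mem_support_iff.2 hne⟩
    have hcard' : q.support.card ≤ N := by
      have h1 := Finset.card_le_card hsupp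
      have h2 := Finset.card_erase_of_mem hd
      omega
    have hqinv : ∀ σ, permRename m n σ q = q := by
      intro σ
      have hC : permRename m n σ (C c) = C c := rename_C _ c
      rw [hqdef, map_sub, map_mul, hp σ, Osum_invariant, hC]
    have hqO : ∀ d' ∈ q.support, Osum R m n d' ∈ A := fun d' h' =>
      hO d' (Finset.mem_of_mem_erase (hsupp h'))
    have hqA : q ∈ A := IH q hcard' hqinv hqO
    have hpeq : p = q + C c * Osum R m n d := by rw [hqdef]; ring
    rw [hpeq]
    refine A.add_mem hqA (A.mul_mem ?_ (hO d hd))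
    rw [← MvPolynomial.algebraMap_eq]
    exact A.algebraMap_mem c

/-- set of nonzero columns. -/
def colSupp (d : Fin m × Fin n →₀ ℕ) : Finset (Fin n) := d.support.image Prod.snd

lemma mem_colSupp {d : Fin m × Fin n →₀ ℕ} {j : Fin n} :
    j ∈ colSupp d ↔ ∃ i, d (i, j) ≠ 0 := by
  simp only [colSupp, Finset.mem_image, Finsupp.mem_support_iff]
  constructor
  · rintro ⟨⟨i, j'⟩, h, rfl⟩
    exact ⟨i, h⟩
  · rintro ⟨i, h⟩
    exact ⟨(i, j), h, rfl⟩

lemma col_zero {d : Fin m × Fin n →₀ ℕ} {j : Fin n} (h : j ∉ colSupp d) (i : Fin m) :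
    d (i, j) = 0 := by
  by_contra h'
  exact h (mem_colSupp.2 ⟨i, h'⟩)

lemma colSupp_act (σ : Equiv.Perm (Fin n)) (d : Fin m × Fin n →₀ ℕ) :
    colSupp (act m n σ d) = (colSupp d).image σ := by
  ext j
  constructor
  · intro hj
    obtain ⟨i, hi⟩ := mem_colSupp.1 hj
    rw [act_apply] at hi
    exact Finset.mem_image.2 ⟨σ⁻¹ j, mem_colSupp.2 ⟨i, hi⟩, by simp⟩
  · intro hj
    obtain ⟨j', hj', rfl⟩ := Finset.mem_image.1 hj
    obtain ⟨i, hi⟩ := mem_colSupp.1 hj'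
    refine mem_colSupp.2 ⟨i, ?_⟩
    rw [act_apply]
    simpa using hi

lemma card_colSupp_act (σ : Equiv.Perm (Fin n)) (d : Fin m × Fin n →₀ ℕ) :
    (colSupp (act m n σ d)).card = (colSupp d).card := by
  rw [colSupp_act, Finset.card_image_of_injective _ σ.injective]

lemma colSupp_add (a b : Fin m × Fin n →₀ ℕ) :
    colSupp (a + b) = colSupp a ∪ colSupp b := by
  ext j
  simp only [mem_colSupp, Finsupp.add_apply, Finset.mem_union]
  constructor
  · rintro ⟨i, h⟩
    by_cases h1 : a (i, j) = 0
    · exact Or.inr ⟨i, by omega⟩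
    · exact Or.inl ⟨i, h1⟩
  · rintro (⟨i, h⟩ | ⟨i, h⟩) <;> exact ⟨i, by omega⟩

/-- decomposition of a nonzero exponent into a primitive one. -/
lemma exists_primitive {e : Fin m →₀ ℕ} (he : e ≠ 0) :
    ∃ (ν : Fin m →₀ ℕ) (g : ℕ), Primitive m ν ∧ g ≠ 0 ∧ ∀ i, e i = g * ν i := by
  set g := Finset.gcd Finset.univ ⇑e with hg
  have hdvd : ∀ i, g ∣ e i := fun i => Finset.gcd_dvd (Finset.mem_univ i)
  have hg0 : g ≠ 0 := by
    intro h
    apply he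
    ext i
    have := hdvd i
    rw [h] at this
    simpa using this
  set ν : Fin m →₀ ℕ := Finsupp.equivFunOnFinite.symm (fun i => e i / g) with hν
  have hνapp : ∀ i, ν i = e i / g := fun i => rfl
  have heq : ∀ i, e i = g * ν i := fun i => (Nat.mul_div_cancel' (hdvd i)).symm
  refine ⟨ν, g, ⟨?_, ?_⟩, hg0, heq⟩
  · intro h
    apply he
    ext i
    rw [heq i, h]
    simp
  · intro e' k hk hcontra
    have hdvd' : ∀ i, g * k ∣ e i := by
      intro i
      refine ⟨e' i, ?_⟩
      rw [heq i, hcontra]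
      simp [Finsupp.smul_apply, mul_assoc]
    have : g * k ∣ g := hg ▸ Finset.dvd_gcd (fun i _ => hdvd' i)
    have hle := Nat.le_of_dvd (Nat.pos_of_ne_zero hg0) this
    nlinarith [Nat.pos_of_ne_zero hg0]

/-- the exponent with `j`-th column `s j • ν`. -/
def Dmap (m n : ℕ) (ν : Fin m →₀ ℕ) (s : Fin n → ℕ) : Fin m × Fin n →₀ ℕ :=
  Finsupp.equivFunOnFinite.symm (fun q => s q.2 * ν q.1)

lemma Dmap_apply (ν : Fin m →₀ ℕ) (s : Fin n → ℕ) (q : Fin m × Fin n) :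
    Dmap m n ν s q = s q.2 * ν q.1 := rfl

lemma Dmap_injective {ν : Fin m →₀ ℕ} (hν : ν ≠ 0) : Function.Injective (Dmap m n ν) := by
  obtain ⟨i₀, hi₀⟩ := Finsupp.ne_iff.1 hν
  rw [Finsupp.coe_zero, Pi.zero_apply] at hi₀
  intro s t h
  funext j
  have := DFunLike.congr_fun h (i₀, j)
  rw [Dmap_apply, Dmap_apply] at this
  exact Nat.eq_of_mul_eq_mul_right (Nat.pos_of_ne_zero hi₀) this

lemma act_Dmap (σ : Equiv.Perm (Fin n)) (ν : Fin m →₀ ℕ) (s : Fin n → ℕ) :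
    act m n σ (Dmap m n ν s) = Dmap m n ν (s ∘ ⇑σ⁻¹) := by
  ext q
  rw [act_apply', Dmap_apply, Dmap_apply]
  rfl

/-- orbit of a function `Fin n → ℕ`. -/
def forb (n : ℕ) (s : Fin n → ℕ) : Finset (Fin n → ℕ) :=
  Finset.image (fun σ : Equiv.Perm (Fin n) => s ∘ ⇑σ) Finset.univ

lemma mem_forb {n : ℕ} {s s' : Fin n → ℕ} : s' ∈ forb n s ↔ ∃ σ : Equiv.Perm (Fin n), s ∘ ⇑σ = s' := by
  simp [forb]

/-- orbit sum in `A_R(n,1)`. -/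
def OFn (R : Type*) [CommRing R] (n : ℕ) (s : Fin n → ℕ) : MvPolynomial (Fin n) R :=
  ∑ s' ∈ forb n s, monomial (Finsupp.equivFunOnFinite.symm s') (1 : R)

lemma OFn_symmetric (s : Fin n → ℕ) : (OFn R n s).IsSymmetric := by
  intro e
  rw [OFn, map_sum]
  have hmap : ∀ s' : Fin n → ℕ,
      Finsupp.mapDomain ⇑e (Finsupp.equivFunOnFinite.symm s')
        = Finsupp.equivFunOnFinite.symm (s' ∘ ⇑e⁻¹) := by
    intro s'
    rw [← Finsupp.equivMapDomain_eq_mapDomain]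
    ext j
    rfl
  simp_rw [rename_monomial, hmap]
  have hinj : ∀ x ∈ forb n s, ∀ y ∈ forb n s, x ∘ ⇑e⁻¹ = y ∘ ⇑e⁻¹ → x = y := by
    intro x _ y _ h
    funext j
    have := congrFun h (e j)
    simpa using this
  have himg := Finset.sum_image
    (f := fun t : Fin n → ℕ => monomial (Finsupp.equivFunOnFinite.symm t) (1 : R))
    (g := fun x : Fin n → ℕ => x ∘ ⇑e⁻¹) (s := forb n s) hinj
  rw [← himg]
  congr 1
  ext t
  simp only [Finset.mem_image]
  constructor
  · rintro ⟨x, hx, rfl⟩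
    obtain ⟨σ, rfl⟩ := mem_forb.1 hx
    exact mem_forb.2 ⟨σ * e⁻¹, rfl⟩
  · intro ht
    obtain ⟨σ, rfl⟩ := mem_forb.1 ht
    exact ⟨s ∘ ⇑(σ * e), mem_forb.2 ⟨σ * e, rfl⟩, by
      funext j; simp [Function.comp, Equiv.Perm.mul_apply]⟩

lemma prod_monomial_one {α : Type*} (s : Finset α) (e : α → (Fin m × Fin n →₀ ℕ)) :
    ∏ j ∈ s, (monomial (e j) (1 : R)) = monomial (∑ j ∈ s, e j) (1 : R) := by
  induction s using Finset.cons_induction with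
  | empty => simp
  | cons a s ha IH =>
    rw [Finset.prod_cons, Finset.sum_cons, IH, monomial_mul, one_mul]

lemma esymVal_eq_aeval {S : Type*} [CommRing S] [Algebra R S] (v : Fin n → S) (k : ℕ) :
    esymVal n v k = aeval v (esymm (Fin n) R k) := by
  rw [esymVal, esymm, map_sum]
  refine Finset.sum_congr rfl fun A _ => ?_
  rw [map_prod]
  exact Finset.prod_congr rfl fun j _ => (aeval_X v j).symm

/-- the generating set. -/
def genSet (R : Type*) [CommRing R] (m n : ℕ) : Set (MvPolynomial (Fin m × Fin n) R) :=
  {q : MvPolynomial (Fin m × Fin n) R | ∃ d : Fin m →₀ ℕ, Primitive m d ∧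
    ∃ k : ℕ, 1 ≤ k ∧ k ≤ n ∧
      q = esymVal n (fun j => subst m n (monomial d (1 : R)) j) k}

/-- the one-primitive-direction case. -/
lemma Osum_Dmap_mem (ν : Fin m →₀ ℕ) (hν : Primitive m ν) (s : Fin n → ℕ) :
    Osum R m n (Dmap m n ν s) ∈ Algebra.adjoin R (genSet R m n) := by
  set v : Fin n → MvPolynomial (Fin m × Fin n) R :=
    fun j => subst m n (monomial ν (1 : R)) j with hv
  set φ : MvPolynomial (Fin n) R →ₐ[R] MvPolynomial (Fin m × Fin n) R := aeval v with hφ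
  have hφmon : ∀ t : Fin n →₀ ℕ, φ (monomial t (1 : R)) = monomial (Dmap m n ν ⇑t) 1 := by
    intro t
    rw [hφ, aeval_monomial, map_one, one_mul]
    have hsub : ∀ j : Fin n, v j = monomial (Finsupp.mapDomain (fun i => (i, j)) ν) (1 : R) := by
      intro j
      rw [hv]
      exact rename_monomial _ ν 1
    rw [Finsupp.prod]
    simp_rw [hsub, monomial_pow, one_pow]
    rw [prod_monomial_one]
    have hsum : (∑ j ∈ t.support, t j • Finsupp.mapDomain (fun i => (i, j)) ν) = Dmap m n ν ⇑t := by
      ext q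
      obtain ⟨i, j⟩ := q
      rw [Dmap_apply, Finsupp.finset_sum_apply]
      have hterm : ∀ j' : Fin n, (t j' • Finsupp.mapDomain (fun i => (i, j')) ν) (i, j)
          = if j' = j then t j * ν i else 0 := by
        intro j'
        rw [Finsupp.smul_apply]
        by_cases hjj : j' = j
        · subst hjj
          rw [if_pos rfl, Finsupp.mapDomain_apply (fun a b hab => (Prod.ext_iff.1 hab).1) ν i]
          simp [mul_comm]
        · rw [if_neg hjj, Finsupp.mapDomain_notin_range, smul_zero]
          rintro ⟨i', hi'⟩
          have := congrArg Prod.snd hi'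
          simp at this
          exact hjj this
      rw [Finset.sum_congr rfl fun j' _ => hterm j']
      rw [Finset.sum_ite_eq' t.support j (fun _ => t j * ν i)]
      by_cases hjs : j ∈ t.support
      · rw [if_pos hjs]
      · rw [if_neg hjs]
        have : t j = 0 := Finsupp.notMem_support_iff.1 hjs
        simp [this]
    rw [hsum]
  have hφO : φ (OFn R n s) = Osum R m n (Dmap m n ν s) := by
    rw [OFn, map_sum]
    have : ∀ s' : Fin n → ℕ, φ (monomial (Finsupp.equivFunOnFinite.symm s') (1 : R))
        = monomial (Dmap m n ν s') 1 := by
      intro s'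
      rw [hφmon]
      congr
    simp_rw [this]
    have himg := Finset.sum_image (f := fun d' => monomial d' (1 : R)) (g := Dmap m n ν)
      (s := forb n s) (fun x _ y _ h => Dmap_injective hν.1 h)
    rw [← himg, Osum]
    congr 1
    ext d'
    simp only [Finset.mem_image]
    constructor
    · rintro ⟨s', hs', rfl⟩
      obtain ⟨σ, rfl⟩ := mem_forb.1 hs'
      refine mem_orb.2 ⟨σ⁻¹, ?_⟩
      rw [act_Dmap, inv_inv]
    · intro hd'
      obtain ⟨σ, rfl⟩ := mem_orb.1 hd'
      exact ⟨s ∘ ⇑σ⁻¹, mem_forb.2 ⟨σ⁻¹, rfl⟩, (act_Dmap σ ν s).symm⟩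
  obtain ⟨p, hp⟩ := esymmAlgHom_surjective (σ := Fin n) R (le_of_eq (Fintype.card_fin n))
    ⟨OFn R n s, OFn_symmetric s⟩
  have hpval : aeval (fun i : Fin n => esymm (Fin n) R (i + 1)) p = OFn R n s := by
    have := congrArg Subtype.val hp
    rwa [esymmAlgHom_apply] at this
  have hcomp : Osum R m n (Dmap m n ν s)
      = aeval (fun i : Fin n => φ (esymm (Fin n) R (i + 1))) p := by
    have h := DFunLike.congr_fun
      (comp_aeval (f := fun i : Fin n => esymm (Fin n) R (i + 1)) φ) p
    rw [AlgHom.comp_apply] at h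
    rw [← hφO, ← hpval]
    exact h
  rw [hcomp]
  have hrange : Set.range (fun i : Fin n => φ (esymm (Fin n) R (i + 1))) ⊆ genSet R m n := by
    rintro q ⟨i, rfl⟩
    refine ⟨ν, hν, i + 1, Nat.succ_le_succ (Nat.zero_le _), i.isLt, ?_⟩
    show φ (esymm (Fin n) R (i + 1)) = _
    rw [hφ, ← esymVal_eq_aeval, hv]
  refine Algebra.adjoin_mono hrange ?_
  rw [Algebra.adjoin_range_eq_range_aeval]
  exact ⟨p, rfl⟩

lemma act_eq_act_of_agree {σ ρ : Equiv.Perm (Fin n)} {d : Fin m × Fin n →₀ ℕ}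
    (h : ∀ j ∈ colSupp d, ρ j = σ j) : act m n ρ d = act m n σ d := by
  ext q
  obtain ⟨i, j⟩ := q
  rw [act_apply, act_apply]
  by_cases h1 : ρ⁻¹ j ∈ colSupp d
  · have hj : σ (ρ⁻¹ j) = j := by rw [← h _ h1]; simp
    have : σ⁻¹ j = ρ⁻¹ j := by
      conv_lhs => rw [← hj]
      simp
    rw [this]
  · by_cases h2 : σ⁻¹ j ∈ colSupp d
    · exfalso
      apply h1
      have hj : ρ (σ⁻¹ j) = j := by rw [h _ h2]; simp
      have : ρ⁻¹ j = σ⁻¹ j := by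
        conv_lhs => rw [← hj]
        simp
      rw [this]
      exact h2
    · rw [col_zero h1, col_zero h2]

lemma exists_perm_extend {f : Fin n → Fin n} {s : Finset (Fin n)} (hf : Set.InjOn f ↑s) :
    ∃ ρ : Equiv.Perm (Fin n), ∀ j ∈ s, ρ j = f j := by
  obtain ⟨g, hg⟩ := Finset.exists_equiv_extend_of_card_eq
    (t := (Finset.univ : Finset (Fin n))) (by simp) (Finset.subset_univ _) hf
  exact ⟨g.trans (Equiv.subtypeUnivEquiv (fun x => Finset.mem_univ x)),
    fun j hj => by simpa using hg j hj⟩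

lemma disjoint_add_mem_orb {d₁ d₂ a b : Fin m × Fin n →₀ ℕ}
    (hd : Disjoint (colSupp d₁) (colSupp d₂))
    (ha : a ∈ orb m n d₁) (hb : b ∈ orb m n d₂)
    (hab : Disjoint (colSupp a) (colSupp b)) : a + b ∈ orb m n (d₁ + d₂) := by
  obtain ⟨σ, rfl⟩ := mem_orb.1 ha
  obtain ⟨τ, rfl⟩ := mem_orb.1 hb
  set f : Fin n → Fin n := fun j => if j ∈ colSupp d₁ then σ j else τ j with hf
  have hinj : Set.InjOn f ↑(colSupp d₁ ∪ colSupp d₂) := by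
    intro x hx y hy hxy
    simp only [Finset.coe_union, Set.mem_union, Finset.mem_coe] at hx hy
    have hAc : ∀ z, z ∈ colSupp d₁ → f z ∈ colSupp (act m n σ d₁) := by
      intro z hz
      rw [hf]
      simp only [if_pos hz]
      rw [colSupp_act]
      exact Finset.mem_image_of_mem _ hz
    have hBc : ∀ z, z ∈ colSupp d₂ → f z ∈ colSupp (act m n τ d₂) := by
      intro z hz
      have hz1 : z ∉ colSupp d₁ := fun hz1 => (Finset.disjoint_left.1 hd) hz1 hz
      rw [hf]
      simp only [if_neg hz1]
      rw [colSupp_act]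
      exact Finset.mem_image_of_mem _ hz
    rcases hx with hx | hx <;> rcases hy with hy | hy
    · have h1 : f x = σ x := by rw [hf]; simp [hx]
      have h2 : f y = σ y := by rw [hf]; simp [hy]
      exact σ.injective (h1 ▸ h2 ▸ hxy)
    · exact absurd (hxy ▸ hAc x hx) (fun hc => (Finset.disjoint_left.1 hab) hc (hBc y hy))
    · exact absurd (hxy ▸ hBc x hx) (fun hc => (Finset.disjoint_left.1 hab) (hxy ▸ hAc y hy) hc)
    · have hx1 : x ∉ colSupp d₁ := fun hz1 => (Finset.disjoint_left.1 hd) hz1 hx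
      have hy1 : y ∉ colSupp d₁ := fun hz1 => (Finset.disjoint_left.1 hd) hz1 hy
      have h1 : f x = τ x := by rw [hf]; simp [hx1]
      have h2 : f y = τ y := by rw [hf]; simp [hy1]
      exact τ.injective (h1 ▸ h2 ▸ hxy)
  obtain ⟨ρ, hρ⟩ := exists_perm_extend hinj
  have h1 : act m n ρ d₁ = act m n σ d₁ := by
    apply act_eq_act_of_agree
    intro j hj
    rw [hρ j (Finset.mem_union_left _ hj), hf]
    simp [hj]
  have h2 : act m n ρ d₂ = act m n τ d₂ := by
    apply act_eq_act_of_agree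
    intro j hj
    have hj1 : j ∉ colSupp d₁ := fun hz1 => (Finset.disjoint_left.1 hd) hz1 hj
    rw [hρ j (Finset.mem_union_right _ hj), hf]
    simp [hj1]
  exact mem_orb.2 ⟨ρ, by rw [act_add, h1, h2]⟩

/-- every orbit sum lies in the adjoin of the generators. -/
lemma Osum_mem : ∀ N (d : Fin m × Fin n →₀ ℕ), (colSupp d).card ≤ N →
    Osum R m n d ∈ Algebra.adjoin R (genSet R m n) := by
  intro N
  induction N using Nat.strong_induction_on with
  | _ N IH =>
  intro d hdN
  by_cases hd0 : d = 0
  · subst hd0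
    have horb : orb m n (0 : Fin m × Fin n →₀ ℕ) = {0} := by
      ext d'
      rw [mem_orb]
      simp only [Finset.mem_singleton]
      constructor
      · rintro ⟨σ, rfl⟩
        ext q
        rw [act_apply']
        simp
      · rintro rfl
        exact ⟨1, act_one 0⟩
    rw [Osum, horb, Finset.sum_singleton, monomial_zero', map_one]
    exact one_mem _
  · -- find a primitive direction from some nonzero column
    obtain ⟨q₀, hq₀⟩ := Finsupp.support_nonempty_iff.2 hd0
    have hq₀' : d (q₀.1, q₀.2) ≠ 0 := by
      rw [Prod.mk.eta]; exact Finsupp.mem_support_iff.1 hq₀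
    set e : Fin m →₀ ℕ := Finsupp.equivFunOnFinite.symm (fun i => d (i, q₀.2)) with he
    have he0 : e ≠ 0 := by
      intro h
      apply hq₀'
      have := DFunLike.congr_fun h q₀.1
      simpa [he] using this
    obtain ⟨ν, g, hν, hg, hcol⟩ := exists_primitive he0
    have hcol' : ∀ i, d (i, q₀.2) = g * ν i := fun i => hcol i
    set S₁ : Finset (Fin n) :=
      Finset.univ.filter (fun j => ∃ k, k ≠ 0 ∧ ∀ i, d (i, j) = k * ν i) with hS₁
    have hmemS₁ : ∀ j, j ∈ S₁ ↔ ∃ k, k ≠ 0 ∧ ∀ i, d (i, j) = k * ν i := by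
      intro j
      rw [hS₁, Finset.mem_filter]
      simp
    by_cases hall : ∀ j ∈ colSupp d, j ∈ S₁
    · have hs : ∀ j, ∃ k, ∀ i, d (i, j) = k * ν i := by
        intro j
        by_cases hj : j ∈ colSupp d
        · obtain ⟨k, _, hk⟩ := (hmemS₁ j).1 (hall j hj)
          exact ⟨k, hk⟩
        · exact ⟨0, fun i => by rw [col_zero hj i, zero_mul]⟩
      choose s hs using hs
      have hDd : d = Dmap m n ν s := by
        ext q
        rw [Dmap_apply, ← hs q.2 q.1, Prod.mk.eta]
      rw [hDd]
      exact Osum_Dmap_mem ν hν s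
    · push_neg at hall
      obtain ⟨j₁, hj₁, hj₁'⟩ := hall
      set d₁ := d.filter (fun q : Fin m × Fin n => q.2 ∈ S₁) with hd₁
      set d₂ := d.filter (fun q : Fin m × Fin n => ¬ q.2 ∈ S₁) with hd₂
      have hsplit : d₁ + d₂ = d := Finsupp.filter_pos_add_filter_neg d _
      have hd₁app : ∀ i j, j ∈ S₁ → d₁ (i, j) = d (i, j) :=
        fun i j hj => Finsupp.filter_apply_pos _ d hj
      have hd₁app' : ∀ i j, j ∉ S₁ → d₁ (i, j) = 0 :=
        fun i j hj => Finsupp.filter_apply_neg _ d hj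
      have hd₂app : ∀ i j, j ∉ S₁ → d₂ (i, j) = d (i, j) :=
        fun i j hj => Finsupp.filter_apply_pos _ d hj
      have hd₂app' : ∀ i j, j ∈ S₁ → d₂ (i, j) = 0 :=
        fun i j hj => Finsupp.filter_apply_neg _ d (not_not_intro hj)
      have hcolS₁ : colSupp d₁ = colSupp d ∩ S₁ := by
        ext j
        rw [mem_colSupp, Finset.mem_inter, mem_colSupp]
        constructor
        · rintro ⟨i, hi⟩
          by_cases hj : j ∈ S₁
          · exact ⟨⟨i, by rwa [hd₁app i j hj] at hi⟩, hj⟩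
          · exact absurd (hd₁app' i j hj) hi
        · rintro ⟨⟨i, hi⟩, hj⟩
          exact ⟨i, by rwa [hd₁app i j hj]⟩
      have hcolS₂ : colSupp d₂ = colSupp d \ S₁ := by
        ext j
        rw [mem_colSupp, Finset.mem_sdiff, mem_colSupp]
        constructor
        · rintro ⟨i, hi⟩
          by_cases hj : j ∈ S₁
          · exact absurd (hd₂app' i j hj) hi
          · exact ⟨⟨i, by rwa [hd₂app i j hj] at hi⟩, hj⟩
        · rintro ⟨⟨i, hi⟩, hj⟩
          exact ⟨i, by rwa [hd₂app i j hj]⟩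
      have hdisj12 : Disjoint (colSupp d₁) (colSupp d₂) := by
        rw [hcolS₁, hcolS₂]
        exact Finset.disjoint_sdiff.mono_left (Finset.inter_subset_right)
      set r₁ := (colSupp d₁).card with hr₁
      set r₂ := (colSupp d₂).card with hr₂
      have hrsum : r₁ + r₂ = (colSupp d).card := by
        rw [hr₁, hr₂, hcolS₁, hcolS₂]
        exact Finset.card_inter_add_card_sdiff _ _
      have hj₀S₁ : q₀.2 ∈ S₁ := (hmemS₁ q₀.2).2 ⟨g, hg, hcol'⟩
      have hj₀col : q₀.2 ∈ colSupp d := mem_colSupp.2 ⟨q₀.1, hq₀'⟩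
      have hr₁pos : 1 ≤ r₁ := by
        rw [hr₁, hcolS₁]
        exact Finset.card_pos.2 ⟨q₀.2, Finset.mem_inter.2 ⟨hj₀col, hj₀S₁⟩⟩
      have hr₂pos : 1 ≤ r₂ := by
        rw [hr₂, hcolS₂]
        exact Finset.card_pos.2 ⟨j₁, Finset.mem_sdiff.2 ⟨hj₁, hj₁'⟩⟩
      -- d₁ is in the one-direction case
      have h1 : Osum R m n d₁ ∈ Algebra.adjoin R (genSet R m n) := by
        have hs : ∀ j, ∃ k, ∀ i, d₁ (i, j) = k * ν i := by
          intro j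
          by_cases hj : j ∈ S₁
          · obtain ⟨k, _, hk⟩ := (hmemS₁ j).1 hj
            exact ⟨k, fun i => by rw [hd₁app i j hj, hk i]⟩
          · exact ⟨0, fun i => by rw [hd₁app' i j hj, zero_mul]⟩
        choose s hs using hs
        have hDd : d₁ = Dmap m n ν s := by
          ext q
          rw [Dmap_apply, ← hs q.2 q.1, Prod.mk.eta]
        rw [hDd]
        exact Osum_Dmap_mem ν hν s
      have h2 : Osum R m n d₂ ∈ Algebra.adjoin R (genSet R m n) := by
        refine IH r₂ (by omega) d₂ le_rfl
      set P := Osum R m n d₁ * Osum R m n d₂ with hP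
      have hPA : P ∈ Algebra.adjoin R (genSet R m n) := mul_mem h1 h2
      have hPinv : ∀ σ, permRename m n σ P = P := by
        intro σ
        rw [hP, map_mul, Osum_invariant, Osum_invariant]
      have hcoeffP : ∀ d'', coeff d'' P
          = ∑ a ∈ orb m n d₁, ∑ b ∈ orb m n d₂, if a + b = d'' then (1 : R) else 0 := by
        intro d''
        rw [hP, Osum, Osum, Finset.sum_mul_sum]
        simp_rw [monomial_mul, one_mul]
        rw [coeff_sum]
        refine Finset.sum_congr rfl fun a _ => ?_
        rw [coeff_sum]
        refine Finset.sum_congr rfl fun b _ => ?_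
        rw [coeff_monomial]
      -- uniqueness of the disjoint decomposition at d
      have huniq : ∀ a ∈ orb m n d₁, ∀ b ∈ orb m n d₂, a + b = d → a = d₁ ∧ b = d₂ := by
        intro a ha b hb hab
        obtain ⟨σ, rfl⟩ := mem_orb.1 ha
        obtain ⟨τ, rfl⟩ := mem_orb.1 hb
        set a := act m n σ d₁
        set b := act m n τ d₂
        have hcup : colSupp a ∪ colSupp b = colSupp d := by rw [← hab, colSupp_add]
        have hcarda : (colSupp a).card = r₁ := card_colSupp_act σ d₁
        have hcardb : (colSupp b).card = r₂ := card_colSupp_act τ d₂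
        have hdisjab : Disjoint (colSupp a) (colSupp b) := by
          have := Finset.card_union_add_card_inter (colSupp a) (colSupp b)
          rw [hcup, hcarda, hcardb, ← hrsum] at this
          have hint : ((colSupp a) ∩ (colSupp b)).card = 0 := by omega
          rw [Finset.card_eq_zero] at hint
          exact Finset.disjoint_iff_inter_eq_empty.2 hint
        have hAply : ∀ q : Fin m × Fin n, a q + b q = d q := fun q => by
          rw [← hab]; simp
        have hAsub : colSupp a ⊆ colSupp d₁ := by
          intro j hj
          have hjb : j ∉ colSupp b := Finset.disjoint_left.1 hdisjab hj
          have hdja : ∀ i, d (i, j) = a (i, j) := by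
            intro i
            rw [← hAply (i, j), col_zero hjb, add_zero]
          have hj' : σ⁻¹ j ∈ colSupp d₁ := by
            obtain ⟨i, hi⟩ := mem_colSupp.1 hj
            rw [act_apply] at hi
            exact mem_colSupp.2 ⟨i, hi⟩
          have hjS₁' : σ⁻¹ j ∈ S₁ := by
            rw [hcolS₁] at hj'
            exact (Finset.mem_inter.1 hj').2
          obtain ⟨k, hk0, hk⟩ := (hmemS₁ (σ⁻¹ j)).1 hjS₁'
          have hjS₁ : j ∈ S₁ := by
            refine (hmemS₁ j).2 ⟨k, hk0, fun i => ?_⟩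
            rw [hdja i, act_apply, hd₁app i _ hjS₁', hk i]
          have hjcol : j ∈ colSupp d := by
            rw [← hcup]
            exact Finset.mem_union_left _ hj
          rw [hcolS₁]
          exact Finset.mem_inter.2 ⟨hjcol, hjS₁⟩
        have hAeq : colSupp a = colSupp d₁ :=
          Finset.eq_of_subset_of_card_le hAsub (by rw [hcarda])
        have hBsub : colSupp b ⊆ colSupp d₂ := by
          intro j hj
          have hja : j ∉ colSupp a := Finset.disjoint_right.1 hdisjab hj
          have hdjb : ∀ i, d (i, j) = b (i, j) := by
            intro i
            rw [← hAply (i, j), col_zero hja, zero_add]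
          have hj' : τ⁻¹ j ∈ colSupp d₂ := by
            obtain ⟨i, hi⟩ := mem_colSupp.1 hj
            rw [act_apply] at hi
            exact mem_colSupp.2 ⟨i, hi⟩
          have hjS₁' : τ⁻¹ j ∉ S₁ := by
            rw [hcolS₂] at hj'
            exact (Finset.mem_sdiff.1 hj').2
          have hjS₁ : j ∉ S₁ := by
            intro hjS
            apply hjS₁'
            obtain ⟨k, hk0, hk⟩ := (hmemS₁ j).1 hjS
            refine (hmemS₁ (τ⁻¹ j)).2 ⟨k, hk0, fun i => ?_⟩
            rw [← hd₂app i _ hjS₁', ← act_apply τ d₂, ← hdjb i, hk i]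
          have hjcol : j ∈ colSupp d := by
            rw [← hcup]
            exact Finset.mem_union_right _ hj
          rw [hcolS₂]
          exact Finset.mem_sdiff.2 ⟨hjcol, hjS₁⟩
        have hBeq : colSupp b = colSupp d₂ :=
          Finset.eq_of_subset_of_card_le hBsub (by rw [hcardb])
        have haeq : a = d₁ := by
          ext q
          obtain ⟨i, j⟩ := q
          by_cases hj : j ∈ colSupp d₁
          · have hja : j ∈ colSupp a := hAeq ▸ hj
            have hjb : j ∉ colSupp b := Finset.disjoint_left.1 hdisjab hja
            have hjS₁ : j ∈ S₁ := by
              rw [hcolS₁] at hj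
              exact (Finset.mem_inter.1 hj).2
            rw [hd₁app i j hjS₁, ← hAply (i, j), col_zero hjb, add_zero]
          · rw [col_zero hj i, col_zero (hAeq ▸ hj : j ∉ colSupp a) i]
        refine ⟨haeq, ?_⟩
        have : d₁ + b = d₁ + d₂ := by rw [hsplit, ← hab, haeq]
        exact add_left_cancel this
      -- q2 = P - Osum d has support of smaller column count
      set q2 := P - Osum R m n d with hq2
      have hq2inv : ∀ σ, permRename m n σ q2 = q2 := by
        intro σ
        rw [hq2, map_sub, hPinv, Osum_invariant]
      have hcoeffPd : coeff d P = 1 := by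
        rw [hcoeffP]
        rw [Finset.sum_eq_single_of_mem d₁ (self_mem_orb d₁)]
        · rw [Finset.sum_eq_single_of_mem d₂ (self_mem_orb d₂)]
          · rw [if_pos hsplit]
          · intro b hb hbne
            rw [if_neg]
            intro habs
            exact hbne (huniq d₁ (self_mem_orb d₁) b hb habs).2
        · intro a ha hane
          refine Finset.sum_eq_zero fun b hb => ?_
          rw [if_neg]
          intro habs
          exact hane (huniq a ha b hb habs).1
      have hq2O : ∀ d'' ∈ q2.support, Osum R m n d'' ∈ Algebra.adjoin R (genSet R m n) := by
        intro d'' h''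
        have hne := MvPolynomial.mem_support_iff.1 h''
        rw [hq2, coeff_sub, coeff_Osum] at hne
        by_cases horb : d'' ∈ orb m n d
        · exfalso
          obtain ⟨σ, rfl⟩ := mem_orb.1 horb
          rw [coeff_invariant hPinv, hcoeffPd, if_pos horb] at hne
          · exact hne (sub_self 1)
        · rw [if_neg horb, sub_zero] at hne
          rw [hcoeffP] at hne
          obtain ⟨a, ha, hane⟩ := Finset.exists_ne_zero_of_sum_ne_zero hne
          obtain ⟨b, hb, hbne⟩ := Finset.exists_ne_zero_of_sum_ne_zero hane
          have habd : a + b = d'' := by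
            by_contra habs
            rw [if_neg habs] at hbne
            exact hbne rfl
          have hover : ¬ Disjoint (colSupp a) (colSupp b) := by
            intro hdisj
            apply horb
            rw [← habd, ← hsplit]
            exact disjoint_add_mem_orb hdisj12 ha hb hdisj
          have hcarda : (colSupp a).card = r₁ := by
            obtain ⟨σ, rfl⟩ := mem_orb.1 ha
            exact card_colSupp_act σ d₁
          have hcardb : (colSupp b).card = r₂ := by
            obtain ⟨τ, rfl⟩ := mem_orb.1 hb
            exact card_colSupp_act τ d₂
          have hint : 1 ≤ ((colSupp a) ∩ (colSupp b)).card := by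
            rw [Nat.one_le_iff_ne_zero]
            intro habs
            rw [Finset.card_eq_zero] at habs
            exact hover (Finset.disjoint_iff_inter_eq_empty.2 habs)
          have hcard'' : (colSupp d'').card < (colSupp d).card := by
            have hun := Finset.card_union_add_card_inter (colSupp a) (colSupp b)
            have hsub : colSupp d'' ⊆ colSupp a ∪ colSupp b := by
              rw [← habd, colSupp_add]
            have := Finset.card_le_card hsub
            omega
          exact IH (colSupp d'').card (by omega) d'' le_rfl
      have hq2A : q2 ∈ Algebra.adjoin R (genSet R m n) :=
        key_span q2.support.card q2 le_rfl hq2inv hq2O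
      have : Osum R m n d = P - q2 := by rw [hq2]; ring
      rw [this]
      exact sub_mem hPA hq2A

lemma mem_invAlg_iff {p : MvPolynomial (Fin m × Fin n) R} :
    p ∈ invAlg R m n ↔ ∀ σ : Equiv.Perm (Fin n), permRename m n σ p = p := Iff.rfl

end Rydh

/-- for m > 1, A_R(n,m)^{Sₙ} is generated as an R-algebra by the e_k(μ)
with μ a primitive monomial of positive degree and 1 ≤ k ≤ n. -/
theorem stmt14 (R : Type*) [CommRing R] (m n : ℕ) (hm : 1 < m) :
    invAlg R m n = Algebra.adjoin R
      {q : MvPolynomial (Fin m × Fin n) R | ∃ d : Fin m →₀ ℕ, Primitive m d ∧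
        ∃ k : ℕ, 1 ≤ k ∧ k ≤ n ∧
          q = esymVal n (fun j => subst m n (monomial d (1 : R)) j) k} := by
  have hgen : {q : MvPolynomial (Fin m × Fin n) R | ∃ d : Fin m →₀ ℕ, Primitive m d ∧
      ∃ k : ℕ, 1 ≤ k ∧ k ≤ n ∧
        q = esymVal n (fun j => subst m n (monomial d (1 : R)) j) k} = Rydh.genSet R m n := rfl
  rw [hgen]
  apply le_antisymm
  · intro p hp
    exact Rydh.key_span p.support.card p le_rfl (Rydh.mem_invAlg_iff.1 hp)
      (fun d _ => Rydh.Osum_mem (Rydh.colSupp d).card d le_rfl)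
  · rw [Algebra.adjoin_le_iff]
    rintro q ⟨d, hd, k, hk1, hkn, rfl⟩
    rw [SetLike.mem_coe, Rydh.mem_invAlg_iff]
    intro σ
    rw [Rydh.esymVal_eq_aeval (R := R)]
    have hcomp := DFunLike.congr_fun
      (comp_aeval (f := fun j : Fin n => subst m n (monomial d (1 : R)) j) (permRename m n σ))
      (esymm (Fin n) R k)
    rw [AlgHom.comp_apply] at hcomp
    rw [hcomp]
    have hsubst : (fun j : Fin n => permRename m n σ (subst m n (monomial d (1 : R)) j))
        = (fun j : Fin n => subst m n (monomial d (1 : R)) j) ∘ ⇑σ := by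
      funext j
      show rename _ (rename _ _) = _
      rw [rename_rename]
      rfl
    rw [hsubst, ← aeval_rename, esymm_isSymmetric _ _ k σ]

end
end

section
/- If R contains ℚ, then A_R(n,m)^{S_n} is generated as an R-algebra by the power-sum type elements e_1(μ) = μ(1)+···+μ(n), where μ ranges over the monomials of positive degree in y_1,...,y_m of total degree at most n. -/
open MvPolynomial Finset
open scoped Classical

noncomputable section

variable {R : Type*} [CommRing R]

/-!
For the column characters `x_j(a) = μ(j)` with `μ = y^a`, consider the power sums
`p_a = ∑ⱼ x_j(a)` and the augmented monomials `N_ν = ∑_f ∏ₛ x_{f s}(ν s)`, the sum running over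
injections `f : Fin k ↪ Fin n`. Splitting `j` according to whether it lies in the range of `f` gives
`p_a N_ν = N_{(a, ν)} + ∑ₜ N_{ν + a eₜ}`. By induction on `k` this identity puts `N_ν` in the algebra
generated by the `p_e` with `e ≤ ∑ ν`, and shows `N_ν ≡ (-1)^k k! p_{∑ ν}` modulo the `p_e` with
`e < ∑ ν` when `ν` has `k + 1` nonzero entries. An exponent of degree `> n` splits into `n + 1`
nonzero parts, for which `N_ν = 0`; dividing by `n!` expresses its power sum through smaller ones.
Finally, an invariant `p` satisfies `n! p = ∑_σ σ p`, and the symmetrisation of a monomial is the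
augmented monomial of its columns.
-/

namespace Multisymmetric

open scoped Nat

section AugmentedMonomial

variable {ι M A : Type*} [AddCommMonoid M] [CommRing A] (x : ι → AddChar M A)

theorem prod_add_single {k : ℕ} (f : Fin k ↪ ι) (ν : Fin k → M) (t : Fin k) (a : M) :
    ∏ s, x (f s) ((ν + Pi.single t a : Fin k → M) s) = x (f t) a * ∏ s, x (f s) (ν s) := by
  simp only [Pi.add_apply, AddChar.map_add_eq_mul, prod_mul_distrib]
  rw [mul_comm, Fintype.prod_eq_single t fun s hs => by simp [hs]]
  simp

theorem sum_add_single {k : ℕ} (ν : Fin k → M) (t : Fin k) (a : M) :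
    ∑ s, (ν + Pi.single t a : Fin k → M) s = ∑ s, ν s + a := by
  simp [sum_add_distrib]

variable [Fintype ι]

def powerSum (a : M) : A := ∑ j, x j a

def augMonomial {k : ℕ} (ν : Fin k → M) : A := ∑ f : Fin k ↪ ι, ∏ s, x (f s) (ν s)

theorem augMonomial_zero (ν : Fin 0 → M) : augMonomial x ν = 1 := by
  simp [augMonomial]

theorem augMonomial_eq_zero_of_card_lt {k : ℕ} (ν : Fin k → M) (h : Fintype.card ι < k) :
    augMonomial x ν = 0 := by
  have := Function.Embedding.isEmpty_of_card_lt (α := Fin k) (β := ι) (by simpa using h)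
  simp [augMonomial]

theorem augMonomial_cons {k : ℕ} (a : M) (ν : Fin k → M) :
    augMonomial x (Fin.cons a ν) =
      ∑ f : Fin k ↪ ι, ∑ j : {j // j ∉ Set.range f}, x j a * ∏ s, x (f s) (ν s) := by
  rw [augMonomial, ← (Equiv.embeddingFinSucc k ι).symm.sum_comp, Fintype.sum_sigma]
  refine Fintype.sum_congr _ _ fun f => Fintype.sum_congr _ _ fun j => ?_
  rw [Fin.prod_univ_succ]
  simp

theorem powerSum_mul_augMonomial {k : ℕ} (a : M) (ν : Fin k → M) :
    powerSum x a * augMonomial x ν =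
      augMonomial x (Fin.cons a ν) + ∑ t, augMonomial x (ν + Pi.single t a) := by
  rw [augMonomial_cons]
  simp only [augMonomial, powerSum, prod_add_single, sum_mul_sum]
  rw [sum_comm, sum_comm (s := univ (α := Fin k)), ← sum_add_distrib]
  refine Fintype.sum_congr _ _ fun f => ?_
  rw [← sum_compl_add_sum (univ.map f), sum_map]
  congr 1
  exact sum_subtype _ (fun j => by simp) _

theorem augMonomial_one (ν : Fin 1 → M) : augMonomial x ν = powerSum x (ν 0) := by
  have h := powerSum_mul_augMonomial x (ν 0) (Fin.tail ν)
  rwa [Fin.cons_self_tail, augMonomial_zero, mul_one, univ_eq_empty, sum_empty, add_zero,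
    eq_comm] at h

end AugmentedMonomial

section Membership

variable {ι M A : Type*} [Fintype ι] [AddCommMonoid M] [PartialOrder M] [CanonicallyOrderedAdd M]
  [CommRing A] (x : ι → AddChar M A) (B : Subring A)

theorem augMonomial_mem {k : ℕ} (ν : Fin k → M) (hB : ∀ e ≤ ∑ s, ν s, powerSum x e ∈ B) :
    augMonomial x ν ∈ B := by
  induction k with
  | zero => simp [augMonomial_zero]
  | succ k ih =>
    cases ν using Fin.consCases with | cons a τ => ?_
    rw [Fin.sum_cons] at hB
    rw [eq_sub_of_add_eq (powerSum_mul_augMonomial x a τ).symm]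
    refine sub_mem (mul_mem (hB a le_self_add) (ih τ fun e he => hB e (he.trans le_add_self)))
      (sum_mem fun t _ => ih _ fun e he => hB e ?_)
    rwa [sum_add_single, add_comm] at he

variable [IsOrderedCancelAddMonoid M]

theorem augMonomial_sub_zsmul_powerSum_mem {k : ℕ} (ν : Fin (k + 1) → M) (hν : ∀ s, ν s ≠ 0)
    (hB : ∀ e < ∑ s, ν s, powerSum x e ∈ B) :
    augMonomial x ν - ((-1) ^ k * k ! : ℤ) • powerSum x (∑ s, ν s) ∈ B := by
  induction k with
  | zero => simp [augMonomial_one]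
  | succ k ih =>
    cases ν using Fin.consCases with | cons a τ => ?_
    simp only [Fin.sum_cons] at hB ⊢
    have ha : a ≠ 0 := by simpa using hν 0
    have hτ (s : Fin (k + 1)) : τ s ≠ 0 := by simpa using hν s.succ
    have hτsum : ∑ s, τ s ≠ 0 := fun h => hτ 0 (sum_eq_zero_iff.1 h 0 (mem_univ _))
    have hpa : powerSum x a ∈ B := hB a (lt_add_of_pos_right a (pos_iff_ne_zero.2 hτsum))
    have hτB : augMonomial x τ ∈ B := augMonomial_mem x B τ fun e he =>
      hB e (he.trans_lt (lt_add_of_pos_left _ (pos_iff_ne_zero.2 ha)))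
    have hupd (t : Fin (k + 1)) : augMonomial x (τ + Pi.single t a) -
        ((-1) ^ k * k ! : ℤ) • powerSum x (a + ∑ s, τ s) ∈ B := by
      have h := ih (τ + Pi.single t a) (fun s => by simp [hτ s])
        (by rwa [sum_add_single, add_comm])
      rwa [sum_add_single, add_comm (∑ s, τ s) a] at h
    have key : augMonomial x (Fin.cons a τ) -
          ((-1) ^ (k + 1) * (k + 1)! : ℤ) • powerSum x (a + ∑ s, τ s) =
        powerSum x a * augMonomial x τ - ∑ t, (augMonomial x (τ + Pi.single t a) -
          ((-1) ^ k * k ! : ℤ) • powerSum x (a + ∑ s, τ s)) := by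
      rw [eq_sub_of_add_eq (powerSum_mul_augMonomial x a τ).symm, sum_sub_distrib, sum_const,
        card_univ, Fintype.card_fin, Nat.factorial_succ]
      push_cast
      module
    rw [key]
    exact sub_mem (mul_mem hpa hτB) (sum_mem fun t _ => hupd t)

end Membership

theorem exists_fin_sum_eq_of_lt_degree {σ : Type*} {k : ℕ} {d : σ →₀ ℕ} (hd : k < d.degree) :
    ∃ ν : Fin (k + 1) → σ →₀ ℕ, (∀ s, ν s ≠ 0) ∧ ∑ s, ν s = d := by
  induction k generalizing d with
  | zero => exact ⟨fun _ => d, fun _ h => by simp [h] at hd, by simp⟩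
  | succ k ih =>
    obtain ⟨i, hi⟩ : ∃ i, d i ≠ 0 := by
      by_contra! h
      simp [(Finsupp.degree_eq_zero_iff d).2 (Finsupp.ext h)] at hd
    have hsplit : Finsupp.single i 1 + (d - Finsupp.single i 1) = d :=
      add_tsub_cancel_of_le (Finsupp.single_le_iff.2 (Nat.one_le_iff_ne_zero.2 hi))
    obtain ⟨ν, hν, hsum⟩ := ih (d := d - Finsupp.single i 1) (by
      rw [← hsplit, map_add, Finsupp.degree_single] at hd
      omega)
    refine ⟨Fin.cons (Finsupp.single i 1) ν, Fin.cases (by simp) hν, ?_⟩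
    rw [Fin.sum_cons, hsum, hsplit]

theorem mem_of_zsmul_mem {A : Type*} [Ring A] [Algebra ℚ A] {B : Subalgebra ℚ A} {z : ℤ}
    (hz : z ≠ 0) {a : A} (h : z • a ∈ B) : a ∈ B := by
  have h' := B.smul_mem h (z : ℚ)⁻¹
  rwa [← Int.cast_smul_eq_zsmul ℚ, smul_smul, inv_mul_cancel₀ (Int.cast_ne_zero.2 hz),
    one_smul] at h'

theorem powerSum_mem_of_degree_le_card {ι σ A : Type*} [Fintype ι] [CommRing A] [Algebra ℚ A]
    (x : ι → AddChar (σ →₀ ℕ) A) (B : Subalgebra ℚ A)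
    (hB : ∀ d : σ →₀ ℕ, d ≠ 0 → d.degree ≤ Fintype.card ι → powerSum x d ∈ B) (d : σ →₀ ℕ) :
    powerSum x d ∈ B := by
  induction d using WellFoundedLT.induction with
  | _ d ih =>
  rcases eq_or_ne d 0 with rfl | hd
  · simp [powerSum]
  rcases le_or_gt d.degree (Fintype.card ι) with hdeg | hdeg
  · exact hB d hd hdeg
  obtain ⟨ν, hν, rfl⟩ := exists_fin_sum_eq_of_lt_degree hdeg
  have h := augMonomial_sub_zsmul_powerSum_mem x B.toSubring ν hν ih
  rw [augMonomial_eq_zero_of_card_lt x ν (by simp), zero_sub, neg_mem_iff] at h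
  exact mem_of_zsmul_mem (by positivity) h

section Columns

variable (R) {σ : Type*} {n : ℕ}

def columnChar (j : Fin n) : AddChar (σ →₀ ℕ) (MvPolynomial (σ × Fin n) R) where
  toFun d := rename (·, j) (monomial d 1)
  map_zero_eq_one' := by simp
  map_add_eq_mul' a b := by rw [← map_mul, monomial_mul, one_mul]

variable {R}

def column (d : σ × Fin n →₀ ℕ) (j : Fin n) : σ →₀ ℕ :=
  d.comapDomain (·, j) (Prod.mk_left_injective j).injOn

theorem sum_mapDomain_column (d : σ × Fin n →₀ ℕ) :
    ∑ j, (column d j).mapDomain (·, j) = d := by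
  ext ⟨i, j₀⟩
  rw [Finsupp.finsetSum_apply, Fintype.sum_eq_single j₀ fun j hj =>
    Finsupp.mapDomain_of_notMem_range _ _ fun ⟨_, h⟩ => hj (congrArg Prod.snd h)]
  rw [Finsupp.mapDomain_apply (Prod.mk_left_injective j₀)]
  rfl

theorem monomial_one_eq_prod_columnChar (d : σ × Fin n →₀ ℕ) :
    monomial d (1 : R) = ∏ j, columnChar R j (column d j) := by
  conv_lhs => rw [← sum_mapDomain_column d, monomial_sum_one]
  simp [columnChar, rename_monomial]

theorem rename_columnChar (e : Equiv.Perm (Fin n)) (j : Fin n) (a : σ →₀ ℕ) :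
    rename (fun q => (q.1, e q.2)) (columnChar R j a) = columnChar R (e j) a := by
  simp [columnChar, rename_rename, Function.comp_def]

theorem rename_powerSum_columnChar (e : Equiv.Perm (Fin n)) (a : σ →₀ ℕ) :
    rename (fun q => (q.1, e q.2)) (powerSum (columnChar R) a) = powerSum (columnChar R) a := by
  simp only [powerSum, map_sum, rename_columnChar]
  exact Equiv.sum_comp e fun j => columnChar R j a

theorem sum_rename_monomial_one (d : σ × Fin n →₀ ℕ) :
    ∑ e : Equiv.Perm (Fin n), rename (fun q => (q.1, e q.2)) (monomial d (1 : R)) =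
      augMonomial (columnChar R) (column d) := by
  simp only [monomial_one_eq_prod_columnChar, map_prod, rename_columnChar, augMonomial]
  exact ((Equiv.embeddingEquivOfFinite (Fin n)).sum_comp
    fun e => ∏ j, columnChar R (e j) (column d j)).symm

theorem mem_of_forall_rename_eq [Algebra ℚ R] (B : Subalgebra R (MvPolynomial (σ × Fin n) R))
    (hB : ∀ d : σ →₀ ℕ, d ≠ 0 → d.degree ≤ n → powerSum (columnChar R) d ∈ B)
    (p : MvPolynomial (σ × Fin n) R)
    (hp : ∀ e : Equiv.Perm (Fin n), rename (fun q => (q.1, e q.2)) p = p) : p ∈ B := by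
  have hB' (d : σ →₀ ℕ) : powerSum (columnChar R) d ∈ B :=
    powerSum_mem_of_degree_le_card _ (B.restrictScalars ℚ)
      (fun d hd hdn => hB d hd (by rwa [Fintype.card_fin] at hdn)) d
  have hsym (q : MvPolynomial (σ × Fin n) R) :
      ∑ e : Equiv.Perm (Fin n), rename (fun q => (q.1, e q.2)) q ∈ B := by
    induction q using MvPolynomial.induction_on' with
    | monomial d r =>
      rw [← mul_one r, ← smul_eq_mul, ← smul_monomial]
      simp only [map_smul, ← smul_sum, sum_rename_monomial_one]
      exact B.smul_mem (augMonomial_mem _ B.toSubring _ fun e _ => hB' e) r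
    | add q₁ q₂ h₁ h₂ =>
      simp only [map_add, sum_add_distrib]
      exact add_mem h₁ h₂
  have hp' := hsym p
  simp only [hp, sum_const, card_univ, Fintype.card_perm, Fintype.card_fin] at hp'
  exact mem_of_zsmul_mem (B := B.restrictScalars ℚ) (z := n !) (by positivity)
    (by rwa [natCast_zsmul])

end Columns

end Multisymmetric

/-- if R ⊇ ℚ, then A_R(n,m)^{Sₙ} is generated as an R-algebra by the
e₁(μ) = μ(1)+⋯+μ(n) with μ a monomial of positive degree and total degree ≤ n. -/
theorem stmt15 (R : Type*) [CommRing R] [Algebra ℚ R] (m n : ℕ) :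
    invAlg R m n = Algebra.adjoin R
      {q : MvPolynomial (Fin m × Fin n) R | ∃ d : Fin m →₀ ℕ, d ≠ 0 ∧
        (d.sum fun _ v => v) ≤ n ∧
        q = ∑ j : Fin n, subst m n (monomial d (1 : R)) j} := by
  apply le_antisymm
  · intro p hp
    refine Multisymmetric.mem_of_forall_rename_eq _ (fun d hd hdn => ?_) p hp
    exact Algebra.subset_adjoin ⟨d, hd, hdn, rfl⟩
  · rw [Algebra.adjoin_le_iff]
    rintro _ ⟨d, -, -, rfl⟩ e
    exact Multisymmetric.rename_powerSum_columnChar e d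

end
end

section
/- The restriction map π_n: A_R(n,m) → A_R(n−1,m), sending x_i(n) ↦ 0 and x_i(j) ↦ x_i(j) for j ≤ n−1, maps the S_n-invariants of each multidegree-a component surjectively onto the S_{n−1}-invariants: π_n(A_R(n,m,a)^{S_n}) = A_R(n−1,m,a)^{S_{n−1}} for all a ∈ ℕ^m. -/
open MvPolynomial Finset
open scoped Classical

noncomputable section

variable {R : Type*} [CommRing R]

/-!
A monomial survives `πₙ₊₁` iff its last column is zero, and then `πₙ₊₁` just deletes that column.
Any two embeddings `Fin n ↪ Fin (n + 1)` differ by an element of `Sₙ₊₁`, which makes the image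
of an invariant invariant. Conversely an `Sₙ`-invariant `q` lifts to the polynomial whose
coefficient at an exponent with some zero column is the coefficient of `q` at that exponent with
the column deleted, and `0` at exponents without zero column. This is independent of the column
deleted: after swapping two zero columns the two deletions differ by a permutation of the
remaining `n` columns, under which the coefficients of `q` are constant.
-/

open Function Equiv

/-- The exponent `d.embDomain (colEmb m g)` is `d` with column `j` moved to column `g j`. -/
def colEmb (m : ℕ) {l k : ℕ} (g : Fin l ↪ Fin k) : Fin m × Fin l ↪ Fin m × Fin k :=
  (Embedding.refl (Fin m)).prodMap g

section Columns

variable {m l k : ℕ}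

lemma colEmb_trans {r : ℕ} (g : Fin l ↪ Fin k) (h : Fin k ↪ Fin r) :
    colEmb m (g.trans h) = (colEmb m g).trans (colEmb m h) := rfl

lemma embDomain_colEmb_apply (g : Fin l ↪ Fin k) (d : Fin m × Fin l →₀ ℕ) (i : Fin m)
    (j : Fin l) : d.embDomain (colEmb m g) (i, g j) = d (i, j) :=
  Finsupp.embDomain_apply_self (colEmb m g) d (i, j)

lemma embDomain_colEmb_of_notMem_range {g : Fin l ↪ Fin k} (d : Fin m × Fin l →₀ ℕ)
    (i : Fin m) {j : Fin k} (hj : j ∉ Set.range g) : d.embDomain (colEmb m g) (i, j) = 0 :=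
  Finsupp.embDomain_of_notMem_range _ _ _ fun ⟨x, hx⟩ => hj ⟨x.2, congrArg Prod.snd hx⟩

lemma wdeg_embDomain_colEmb (g : Fin l ↪ Fin k) (d : Fin m × Fin l →₀ ℕ) :
    wdeg m k (d.embDomain (colEmb m g)) = wdeg m l d := by
  funext i
  rw [wdeg, wdeg, ← Finset.sum_subset (Finset.subset_univ (Finset.univ.map g)),
    Finset.sum_map]
  · simp only [embDomain_colEmb_apply]
  · intro j _ hj
    refine embDomain_colEmb_of_notMem_range d i fun ⟨x, hx⟩ => hj ?_
    simp [← hx]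

lemma coeff_embDomain_permRename (σ : Perm (Fin k)) (p : MvPolynomial (Fin m × Fin k) R)
    (d : Fin m × Fin k →₀ ℕ) :
    coeff (d.embDomain (colEmb m σ.toEmbedding)) (permRename m k σ p) = coeff d p :=
  coeff_rename_embDomain _ _ _

lemma embDomain_colEmb_symm_embDomain (σ : Perm (Fin k)) (x : Fin m × Fin k →₀ ℕ) :
    (x.embDomain (colEmb m σ.toEmbedding)).embDomain (colEmb m σ.symm.toEmbedding) = x := by
  have hid : colEmb m (σ.toEmbedding.trans σ.symm.toEmbedding) = Embedding.refl _ := by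
    ext <;> simp [colEmb]
  rw [← Finsupp.embDomain_trans_apply, ← colEmb_trans, hid, Finsupp.embDomain_refl, id]

theorem mem_invSub_iff {p : MvPolynomial (Fin m × Fin k) R} :
    p ∈ invSub R m k ↔
      ∀ (σ : Perm (Fin k)) d, coeff (d.embDomain (colEmb m σ.toEmbedding)) p = coeff d p := by
  refine ⟨fun hp σ d => ?_, fun hp σ => ?_⟩
  · conv_lhs => rw [← hp σ]
    exact coeff_embDomain_permRename σ p d
  ext x
  obtain ⟨y, rfl⟩ : ∃ y, y.embDomain (colEmb m σ.toEmbedding) = x :=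
    ⟨x.embDomain (colEmb m σ.symm.toEmbedding), by
      simpa using embDomain_colEmb_symm_embDomain σ.symm x⟩
  rw [coeff_embDomain_permRename, hp]

theorem coeff_embDomain_colEmb_of_mem_invSub {p : MvPolynomial (Fin m × Fin k) R}
    (hp : p ∈ invSub R m k) (g g' : Fin l ↪ Fin k) (d : Fin m × Fin l →₀ ℕ) :
    coeff (d.embDomain (colEmb m g)) p = coeff (d.embDomain (colEmb m g')) p := by
  obtain ⟨σ, hσ⟩ := Perm.exists_extending_pair g g' g.injective g'.injective
  have hg' : g' = g.trans σ.toEmbedding := by ext j; simp [hσ]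
  rw [hg', colEmb_trans, Finsupp.embDomain_trans_apply, mem_invSub_iff.1 hp]

end Columns

section Restriction

variable {m n : ℕ}

lemma projDown_eq_killCompl :
    projDown R m n = killCompl (colEmb m (Fin.castSuccEmb (n := n))).injective := by
  refine algHom_ext fun ⟨i, j⟩ => ?_
  induction j using Fin.lastCases with
  | last => simp [projDown, killCompl, colEmb]
  | cast j =>
    have hX : (X (i, j.castSucc) : MvPolynomial (Fin m × Fin (n + 1)) R) =
        rename (colEmb m Fin.castSuccEmb) (X (i, j)) := by rw [rename_X]; rfl
    conv_rhs => rw [hX, killCompl_rename_app]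
    simp [projDown]

lemma coeff_projDown (p : MvPolynomial (Fin m × Fin (n + 1)) R) (d : Fin m × Fin n →₀ ℕ) :
    coeff d (projDown R m n p) = coeff (d.embDomain (colEmb m Fin.castSuccEmb)) p := by
  rw [projDown_eq_killCompl, coeff_killCompl, Finsupp.embDomain_eq_mapDomain]

theorem projDown_mem_invSub {p : MvPolynomial (Fin m × Fin (n + 1)) R}
    (hp : p ∈ invSub R m (n + 1)) : projDown R m n p ∈ invSub R m n := by
  refine mem_invSub_iff.2 fun σ d => ?_
  rw [coeff_projDown, coeff_projDown, ← Finsupp.embDomain_trans_apply, ← colEmb_trans,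
    coeff_embDomain_colEmb_of_mem_invSub hp _ Fin.castSuccEmb]

theorem projDown_mem_comp {p : MvPolynomial (Fin m × Fin (n + 1)) R} {a : Fin m → ℕ}
    (hp : p ∈ comp R m (n + 1) a) : projDown R m n p ∈ comp R m n a := by
  intro d hd
  rw [mem_support_iff, coeff_projDown] at hd
  rw [← wdeg_embDomain_colEmb Fin.castSuccEmb]
  exact hp _ (mem_support_iff.2 hd)

end Restriction

lemma Fin.exists_perm_eq_trans_succAboveEmb {n : ℕ} (g : Fin n ↪ Fin (n + 1)) {b : Fin (n + 1)}
    (hb : b ∉ Set.range g) : ∃ ρ : Perm (Fin n), g = ρ.toEmbedding.trans b.succAboveEmb := by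
  choose k hk using fun j => Fin.exists_succAbove_eq fun h : g j = b => hb ⟨j, h⟩
  have hinj : Injective k := fun j j' h => g.injective (by rw [← hk, ← hk j', h])
  exact ⟨.ofBijective k (Finite.injective_iff_bijective.1 hinj), by ext j; simp [hk]⟩

section Lift

variable {m n : ℕ}

lemma embDomain_colEmb_swap {k : ℕ} (E : Fin m × Fin k →₀ ℕ) {a b : Fin k}
    (ha : ∀ i, E (i, a) = 0) (hb : ∀ i, E (i, b) = 0) :
    E.embDomain (colEmb m (swap a b).toEmbedding) = E := by
  ext ⟨i, j⟩
  obtain ⟨j, rfl⟩ := (swap a b).surjective j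
  refine (embDomain_colEmb_apply (swap a b).toEmbedding E i j).trans ?_
  rcases eq_or_ne j a with rfl | hja
  · rw [swap_apply_left, ha, hb]
  rcases eq_or_ne j b with rfl | hjb
  · rw [swap_apply_right, ha, hb]
  rw [swap_apply_of_ne_of_ne hja hjb]

/-- Swapping the two zero columns reduces this to two embeddings missing the same column, which
differ by a permutation of `Fin n`. -/
theorem coeff_eq_of_embDomain_colEmb_eq {q : MvPolynomial (Fin m × Fin n) R}
    (hq : q ∈ invSub R m n) {g g' : Fin n ↪ Fin (n + 1)} {d d' : Fin m × Fin n →₀ ℕ}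
    (h : d.embDomain (colEmb m g) = d'.embDomain (colEmb m g')) : coeff d q = coeff d' q := by
  obtain ⟨a, ha⟩ : ∃ a, a ∉ Set.range g := by
    by_contra! hsurj
    simpa using Fintype.card_le_of_surjective g fun a => hsurj a
  obtain ⟨b, hb⟩ : ∃ b, b ∉ Set.range g' := by
    by_contra! hsurj
    simpa using Fintype.card_le_of_surjective g' fun b => hsurj b
  have hswap : d.embDomain (colEmb m (g.trans (swap a b).toEmbedding)) =
      d'.embDomain (colEmb m g') := by
    rw [colEmb_trans, Finsupp.embDomain_trans_apply, embDomain_colEmb_swap _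
      (fun i => embDomain_colEmb_of_notMem_range d i ha), h]
    intro i
    rw [h]
    exact embDomain_colEmb_of_notMem_range d' i hb
  obtain ⟨ρ, hρ⟩ := Fin.exists_perm_eq_trans_succAboveEmb (g.trans (swap a b).toEmbedding)
    (b := b) fun ⟨j, hj⟩ => ha ⟨j, by simpa [swap_apply_eq_iff] using hj⟩
  obtain ⟨ρ', hρ'⟩ := Fin.exists_perm_eq_trans_succAboveEmb g' hb
  rw [hρ, hρ', colEmb_trans, colEmb_trans, Finsupp.embDomain_trans_apply,
    Finsupp.embDomain_trans_apply, Finsupp.embDomain_inj] at hswap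
  rw [← mem_invSub_iff.1 hq ρ, hswap, mem_invSub_iff.1 hq ρ']

def liftCoeff (q : MvPolynomial (Fin m × Fin n) R) (e : Fin m × Fin (n + 1) →₀ ℕ) : R :=
  if h : ∃ (d : Fin m × Fin n →₀ ℕ) (g : Fin n ↪ Fin (n + 1)), d.embDomain (colEmb m g) = e
  then coeff h.choose q else 0

lemma liftCoeff_embDomain {q : MvPolynomial (Fin m × Fin n) R} (hq : q ∈ invSub R m n)
    (g : Fin n ↪ Fin (n + 1)) (d : Fin m × Fin n →₀ ℕ) :
    liftCoeff q (d.embDomain (colEmb m g)) = coeff d q := by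
  have h : ∃ (d' : Fin m × Fin n →₀ ℕ) (g' : Fin n ↪ Fin (n + 1)),
      d'.embDomain (colEmb m g') = d.embDomain (colEmb m g) := ⟨d, g, rfl⟩
  rw [liftCoeff, dif_pos h]
  exact coeff_eq_of_embDomain_colEmb_eq hq h.choose_spec.choose_spec

lemma exists_embDomain_eq_of_liftCoeff_ne_zero {q : MvPolynomial (Fin m × Fin n) R}
    {e : Fin m × Fin (n + 1) →₀ ℕ} (he : liftCoeff q e ≠ 0) :
    ∃ d ∈ q.support, ∃ g : Fin n ↪ Fin (n + 1), d.embDomain (colEmb m g) = e := by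
  rw [liftCoeff] at he
  split_ifs at he with h
  · exact ⟨h.choose, mem_support_iff.2 he, h.choose_spec⟩
  · exact absurd rfl he

def liftInv (q : MvPolynomial (Fin m × Fin n) R) : MvPolynomial (Fin m × Fin (n + 1)) R :=
  ∑ e ∈ (univ ×ˢ q.support).image (fun x : (Fin n ↪ Fin (n + 1)) × _ =>
    x.2.embDomain (colEmb m x.1)), monomial e (liftCoeff q e)

lemma coeff_liftInv (q : MvPolynomial (Fin m × Fin n) R) (e : Fin m × Fin (n + 1) →₀ ℕ) :
    coeff e (liftInv q) = liftCoeff q e := by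
  rw [liftInv, coeff_sum]
  simp only [coeff_monomial]
  rw [Finset.sum_ite_eq']
  refine ite_eq_left_iff.2 fun he => ?_
  by_contra hne
  obtain ⟨d, hd, g, rfl⟩ := exists_embDomain_eq_of_liftCoeff_ne_zero (Ne.symm hne)
  exact he (mem_image.2 ⟨(g, d), mem_product.2 ⟨mem_univ g, hd⟩, rfl⟩)

theorem liftInv_mem_invSub {q : MvPolynomial (Fin m × Fin n) R} (hq : q ∈ invSub R m n) :
    liftInv q ∈ invSub R m (n + 1) := by
  refine mem_invSub_iff.2 fun σ e => ?_
  rw [coeff_liftInv, coeff_liftInv]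
  by_cases h : ∃ (d : Fin m × Fin n →₀ ℕ) (g : Fin n ↪ Fin (n + 1)),
      d.embDomain (colEmb m g) = e
  · obtain ⟨d, g, rfl⟩ := h
    rw [← Finsupp.embDomain_trans_apply, ← colEmb_trans, liftCoeff_embDomain hq,
      liftCoeff_embDomain hq]
  · have h' : ¬∃ (d : Fin m × Fin n →₀ ℕ) (g : Fin n ↪ Fin (n + 1)),
        d.embDomain (colEmb m g) = e.embDomain (colEmb m σ.toEmbedding) := by
      rintro ⟨d, g, hdg⟩
      refine h ⟨d, g.trans σ.symm.toEmbedding, ?_⟩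
      rw [colEmb_trans, Finsupp.embDomain_trans_apply, hdg, embDomain_colEmb_symm_embDomain]
    rw [liftCoeff, liftCoeff, dif_neg h, dif_neg h']

theorem liftInv_mem_comp {q : MvPolynomial (Fin m × Fin n) R} {a : Fin m → ℕ}
    (hq : q ∈ comp R m n a) : liftInv q ∈ comp R m (n + 1) a := by
  intro e he
  rw [mem_support_iff, coeff_liftInv] at he
  obtain ⟨d, hd, g, rfl⟩ := exists_embDomain_eq_of_liftCoeff_ne_zero he
  rw [wdeg_embDomain_colEmb, hq d hd]

theorem projDown_liftInv {q : MvPolynomial (Fin m × Fin n) R} (hq : q ∈ invSub R m n) :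
    projDown R m n (liftInv q) = q := by
  ext d
  rw [coeff_projDown, coeff_liftInv, liftCoeff_embDomain hq]

end Lift

/-- the restriction map πₙ₊₁ : A_R(n+1,m) → A_R(n,m) maps the Sₙ₊₁-invariants
of each multidegree-a component onto the Sₙ-invariants of that component. -/
theorem stmt16 (R : Type*) [CommRing R] (m n : ℕ) (a : Fin m → ℕ) :
    Submodule.map (projDown R m n).toLinearMap
        (invSub R m (n + 1) ⊓ comp R m (n + 1) a) =
      invSub R m n ⊓ comp R m n a := by
  apply le_antisymm
  · rintro _ ⟨p, ⟨hp_inv, hp_comp⟩, rfl⟩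
    exact ⟨projDown_mem_invSub hp_inv, projDown_mem_comp hp_comp⟩
  · rintro q ⟨hq_inv, hq_comp⟩
    exact ⟨liftInv q, ⟨liftInv_mem_invSub hq_inv, liftInv_mem_comp hq_comp⟩,
      projDown_liftInv hq_inv⟩

end
end

section
/- Under the restriction map π_n: A_R(n,m)^{S_n} → A_R(n−1,m)^{S_{n−1}}, the basis elements behave as π_n(e_α) = e_α if |α| ≤ n−1 and π_n(e_α) = 0 if |α| = n. -/
open MvPolynomial Finset
open scoped Classical

noncomputable section

variable {R : Type*} [CommRing R]

lemma projDown_subst (m n : ℕ) (g : MvPolynomial (Fin m) R) (i : Fin n) :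
    projDown R m n (subst m (n+1) g (Fin.castSucc i)) = subst m n g i := by
  have h : (projDown R m n).comp
      (rename (fun i' : Fin m => (i', Fin.castSucc i)) : MvPolynomial (Fin m) R →ₐ[R] _)
      = (rename (fun i' : Fin m => (i', i))) := by
    apply MvPolynomial.algHom_ext
    intro i'
    simp [projDown, i.isLt]
  exact congrFun (congrArg DFunLike.coe h) g

lemma projDown_subst_last (m n : ℕ) (d : Fin m →₀ ℕ) (hd : d ≠ 0) :
    projDown R m n (subst m (n+1) ((monomial d) (1:R)) (Fin.last n)) = 0 := by
  unfold subst projDown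
  rw [aeval_rename]
  rw [aeval_monomial]
  obtain ⟨i0, hi0⟩ := Finsupp.support_nonempty_iff.2 hd
  rw [Finsupp.prod, Finset.prod_eq_zero hi0]
  · simp
  · show (if h : ((Fin.last n : Fin (n+1)) : ℕ) < n then (X (i0, ⟨(Fin.last n : ℕ), h⟩) : MvPolynomial (Fin m × Fin n) R) else 0) ^ d i0 = 0
    rw [dif_neg (by simp [Fin.last])]
    exact zero_pow (Finsupp.mem_support_iff.1 hi0)

lemma projDown_eAlphaM (m n : ℕ) (α : {d : Fin m →₀ ℕ // d ≠ 0} →₀ ℕ) :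
    projDown R m n (eAlphaM R m (n+1) α) = eAlphaM R m n α := by
  unfold eAlphaM eAlpha
  set ι := Fin α.support.card
  set f : ι → MvPolynomial (Fin m) R :=
    fun l => monomial ((α.support.equivFin.symm l) : {d : Fin m →₀ ℕ // d ≠ 0}).1 (1 : R) with hf
  have key : MvPolynomial.map (projDown R m n).toRingHom
      (∏ i : Fin (n+1), (1 + ∑ h : ι, X h * C (subst m (n+1) (f h) i)))
      = ∏ i : Fin n, (1 + ∑ h : ι, X h * C (subst m n (f h) i)) := by
    rw [map_prod, Fin.prod_univ_castSucc]
    have hlast : MvPolynomial.map (projDown R m n).toRingHom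
        (1 + ∑ h : ι, X h * C (subst m (n+1) (f h) (Fin.last n))) = 1 := by
      simp only [map_add, map_one, map_sum, map_mul, map_X, map_C]
      have : ∀ h : ι, (projDown R m n) (subst m (n+1) (f h) (Fin.last n)) = 0 := by
        intro h
        exact projDown_subst_last m n _ ((α.support.equivFin.symm h) : {d : Fin m →₀ ℕ // d ≠ 0}).2
      simp [this]
    rw [hlast, mul_one]
    apply Finset.prod_congr rfl
    intro i _
    simp only [map_add, map_one, map_sum, map_mul, map_X, map_C]
    congr 1
    apply Finset.sum_congr rfl
    intro h _
    rw [show (projDown R m n).toRingHom (subst m (n + 1) (f h) i.castSucc) = projDown R m n (subst m (n + 1) (f h) i.castSucc) from rfl, projDown_subst]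
  calc (projDown R m n) (coeff (Finsupp.equivFunOnFinite.symm fun l => α (α.support.equivFin.symm l))
        (∏ i : Fin (n+1), (1 + ∑ h : ι, X h * C (subst m (n+1) (f h) i))))
      = coeff (Finsupp.equivFunOnFinite.symm fun l => α (α.support.equivFin.symm l))
        (MvPolynomial.map (projDown R m n).toRingHom
          (∏ i : Fin (n+1), (1 + ∑ h : ι, X h * C (subst m (n+1) (f h) i)))) := by
        rw [coeff_map]; rfl
    _ = _ := by rw [key]

lemma eAlphaM_eq_zero (m n : ℕ) (α : {d : Fin m →₀ ℕ // d ≠ 0} →₀ ℕ)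
    (hα : n < (α.sum fun _ v => v)) : eAlphaM R m n α = 0 := by
  unfold eAlphaM eAlpha
  set ι := Fin α.support.card
  set f : ι → MvPolynomial (Fin m) R :=
    fun l => monomial ((α.support.equivFin.symm l) : {d : Fin m →₀ ℕ // d ≠ 0}).1 (1 : R) with hf
  set β : ι →₀ ℕ := Finsupp.equivFunOnFinite.symm fun l => α (α.support.equivFin.symm l) with hβ
  apply coeff_eq_zero_of_totalDegree_lt
  have hdeg : (∏ i : Fin n, ((1 : MvPolynomial ι (MvPolynomial (Fin m × Fin n) R))
      + ∑ h : ι, X h * C (subst m n (f h) i))).totalDegree ≤ n := by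
    refine le_trans (totalDegree_finset_prod _ _) ?_
    have : ∀ i : Fin n, ((1 : MvPolynomial ι (MvPolynomial (Fin m × Fin n) R))
        + ∑ h : ι, X h * C (subst m n (f h) i)).totalDegree ≤ 1 := by
      intro i
      refine le_trans (totalDegree_add _ _) ?_
      simp only [totalDegree_one, max_le_iff]
      constructor
      · omega
      · refine le_trans (totalDegree_finset_sum _ _) ?_
        apply Finset.sup_le
        intro h _
        refine le_trans (totalDegree_mul _ _) ?_
        have hx : (X h : MvPolynomial ι (MvPolynomial (Fin m × Fin n) R)).totalDegree ≤ 1 := by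
          rw [X]
          simpa using totalDegree_monomial_le (Finsupp.single h 1) (1 : MvPolynomial (Fin m × Fin n) R)
        rw [totalDegree_C]
        omega
    calc ∑ i : Fin n, ((1 : MvPolynomial ι (MvPolynomial (Fin m × Fin n) R))
          + ∑ h : ι, X h * C (subst m n (f h) i)).totalDegree
        ≤ ∑ _i : Fin n, 1 := Finset.sum_le_sum fun i _ => this i
      _ = n := by simp
  have hsum : ∑ l ∈ β.support, β l = (α.sum fun _ v => v) := by
    have h1 : ∑ l ∈ β.support, β l = ∑ l ∈ (Finset.univ : Finset ι), β l := by
      apply Finset.sum_subset (Finset.subset_univ _)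
      intro x _ hx
      simpa [Finsupp.mem_support_iff] using hx
    rw [h1]
    have h2 : ∀ l : ι, β l = α (α.support.equivFin.symm l) := fun l => rfl
    simp_rw [h2]
    rw [Equiv.sum_comp (α.support.equivFin.symm) (fun x => α x)]
    rw [Finsupp.sum]
    exact (Finset.sum_attach _ _)
  rw [hsum]
  exact lt_of_le_of_lt hdeg hα

/-- under πₙ₊₁ : A_R(n+1,m)^{Sₙ₊₁} → A_R(n,m)^{Sₙ} one has
π(e_α) = e_α when |α| ≤ n and π(e_α) = 0 when |α| = n+1. -/
theorem stmt17 (R : Type*) [CommRing R] (m n : ℕ)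
    (α : {d : Fin m →₀ ℕ // d ≠ 0} →₀ ℕ) (hα : (α.sum fun _ v => v) ≤ n + 1) :
    ((α.sum fun _ v => v) ≤ n → projDown R m n (eAlphaM R m (n + 1) α) = eAlphaM R m n α) ∧
    ((α.sum fun _ v => v) = n + 1 → projDown R m n (eAlphaM R m (n + 1) α) = 0) := by
  refine ⟨fun _ => projDown_eAlphaM m n α, fun h => ?_⟩
  rw [projDown_eAlphaM]
  exact eAlphaM_eq_zero m n α (by omega)

end
end

section
/- For each a ∈ ℕ^m and all n ≥ |a| := ∑_j a_j, the restriction map induces an isomorphism A_R(n,m,a)^{S_n} ≅ A_R(|a|,m,a)^{S_{|a|}}; in other words, the multidegree-a multisymmetric functions stabilize for n ≥ |a|. -/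
open MvPolynomial Finset
open scoped Classical

noncomputable section

variable {R : Type*} [CommRing R]

/-! Truncation to the first `N` columns reads off the coefficients of `p` at the exponents
supported in those columns. An exponent of multidegree `a` uses at most `|a| ≤ N` columns, so
it can be moved into the first `N` columns by a permutation; by invariance the truncation is
injective. The `S_N`-invariants are spanned by orbit sums, and the orbit sum of an exponent `d`
lifts to the `S_n`-orbit sum of `d`: two exponents supported in the first `N` columns that are
conjugate under `S_n` are already conjugate under `S_N`, since a value-preserving bijection
between their nonzero columns extends to a permutation. -/

theorem Equiv.Perm.exists_apply_eq_of_support_equiv {ι M : Type*} [Finite ι] [Zero M]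
    {c c' : ι → M} (e : Function.support c ≃ Function.support c')
    (he : ∀ j, c' (e j) = c (j : ι)) : ∃ τ : Equiv.Perm ι, ∀ j, c' (τ j) = c j := by
  refine ⟨e.extendSubtype, fun j => ?_⟩
  by_cases hj : j ∈ Function.support c
  · rw [e.extendSubtype_apply_of_mem j hj, he]
  · have hτj := e.extendSubtype_not_mem j hj
    rw [Function.notMem_support] at hj hτj
    rw [hj, hτj]

theorem Equiv.Perm.exists_apply_eq_of_extend_eq {ι κ M : Type*} [Finite ι] [Zero M]
    {f g : ι → κ} (hf : Function.Injective f) (hg : Function.Injective g) {c c' : ι → M}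
    (h : Function.extend g c 0 = Function.extend f c' 0) :
    ∃ τ : Equiv.Perm ι, ∀ j, c' (τ j) = c j := by
  have hsupp : g '' Function.support c = f '' Function.support c' := by
    rw [← Function.support_extend_zero hg, ← Function.support_extend_zero hf, h]
  let e : Function.support c ≃ Function.support c' :=
    (Equiv.Set.image g _ hg).trans ((Equiv.setCongr hsupp).trans (Equiv.Set.image f _ hf).symm)
  refine exists_apply_eq_of_support_equiv e fun j => ?_
  have hfe : f (e j) = g j :=
    congrArg Subtype.val ((Equiv.Set.image f _ hf).apply_symm_apply
      ⟨g j, hsupp ▸ Set.mem_image_of_mem g j.2⟩)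
  rw [← hf.extend_apply c' 0, hfe, ← h, hg.extend_apply]

namespace Multisymmetric

variable {m k N n : ℕ}

/-- Exponents are indexed by pairs `(i, j)` standing for the variable `x_i(j)`; `colMap f`
renames `x_i(j)` to `x_i(f j)`. -/
def colMap (f : Fin N → Fin n) (d : Fin m × Fin N →₀ ℕ) : Fin m × Fin n →₀ ℕ :=
  Finsupp.mapDomain (Prod.map id f) d

lemma colMap_colMap (g : Fin n → Fin k) (f : Fin N → Fin n) (d : Fin m × Fin N →₀ ℕ) :
    colMap g (colMap f d) = colMap (g ∘ f) d :=
  (Finsupp.mapDomain_comp).symm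

lemma colMap_one (d : Fin m × Fin n →₀ ℕ) : colMap (1 : Equiv.Perm (Fin n)) d = d :=
  Finsupp.mapDomain_id

lemma colMap_mul (σ τ : Equiv.Perm (Fin n)) (d : Fin m × Fin n →₀ ℕ) :
    colMap (σ * τ) d = colMap σ (colMap τ d) :=
  (colMap_colMap σ τ d).symm

lemma colMap_perm_inv (σ : Equiv.Perm (Fin n)) (d : Fin m × Fin n →₀ ℕ) :
    colMap σ (colMap (σ⁻¹ : Equiv.Perm (Fin n)) d) = d := by
  rw [← colMap_mul, mul_inv_cancel, colMap_one]

lemma colMap_apply {f : Fin N → Fin n} (hf : Function.Injective f) (d : Fin m × Fin N →₀ ℕ)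
    (i : Fin m) (k : Fin n) :
    colMap f d (i, k) = Function.extend f (fun j i => d (i, j)) 0 k i := by
  by_cases hk : ∃ j, f j = k
  · obtain ⟨j, rfl⟩ := hk
    rw [hf.extend_apply]
    exact Finsupp.mapDomain_apply (Function.injective_id.prodMap hf) d (i, j)
  · rw [Function.extend_apply' _ _ _ hk]
    refine Finsupp.mapDomain_of_notMem_range _ _ ?_
    rintro ⟨⟨i', j⟩, h⟩
    exact hk ⟨j, congrArg Prod.snd h⟩

lemma colMap_perm_apply (σ : Equiv.Perm (Fin n)) (d : Fin m × Fin n →₀ ℕ) (i : Fin m)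
    (j : Fin n) : colMap σ d (i, σ j) = d (i, j) := by
  rw [colMap_apply σ.injective, σ.injective.extend_apply]

lemma exists_colMap_eq_of_colMap_eq {f g : Fin N → Fin n} (hf : Function.Injective f)
    (hg : Function.Injective g) {d d' : Fin m × Fin N →₀ ℕ} (h : colMap g d = colMap f d') :
    ∃ τ : Equiv.Perm (Fin N), colMap τ d = d' := by
  have hext : Function.extend g (fun j i => d (i, j)) 0 =
      Function.extend f (fun j i => d' (i, j)) 0 := by
    funext k i
    rw [← colMap_apply hg, ← colMap_apply hf, h]
  obtain ⟨τ, hτ⟩ := Equiv.Perm.exists_apply_eq_of_extend_eq hf hg hext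
  refine ⟨τ, Finsupp.ext fun ⟨i, k⟩ => ?_⟩
  obtain ⟨j, rfl⟩ := τ.surjective k
  rw [colMap_perm_apply]
  exact (congrFun (hτ j) i).symm

lemma wdeg_apply (d : Fin m × Fin n →₀ ℕ) (i : Fin m) :
    wdeg m n d i = d.sum fun x k => if x.1 = i then k else 0 := by
  rw [Finsupp.sum_fintype _ _ (by simp), Fintype.sum_prod_type, Fintype.sum_eq_single i]
  · simp [wdeg]
  · intro i' hi'
    simp [hi']

lemma wdeg_colMap (f : Fin N → Fin n) (d : Fin m × Fin N →₀ ℕ) :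
    wdeg m n (colMap f d) = wdeg m N d := by
  funext i
  rw [wdeg_apply, wdeg_apply, colMap, Finsupp.sum_mapDomain_index (by simp)
    (by intros; split_ifs <;> rfl)]
  rfl

lemma sum_wdeg (d : Fin m × Fin n →₀ ℕ) : ∑ i, wdeg m n d i = d.sum fun _ k => k := by
  simp only [wdeg_apply, Finsupp.sum]
  rw [Finset.sum_comm]
  simp

lemma card_image_snd_support_le (d : Fin m × Fin n →₀ ℕ) :
    (d.support.image Prod.snd).card ≤ ∑ i, wdeg m n d i := by
  rw [sum_wdeg]
  calc (d.support.image Prod.snd).card ≤ d.support.card := Finset.card_image_le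
    _ = ∑ x ∈ d.support, 1 := Finset.card_eq_sum_ones _
    _ ≤ d.sum fun _ k => k :=
      Finset.sum_le_sum fun x hx => Nat.one_le_iff_ne_zero.2 (Finsupp.mem_support_iff.1 hx)

lemma exists_colMap_perm_eq_colMap_castLE (hn : N ≤ n) (d : Fin m × Fin n →₀ ℕ)
    (hd : (d.support.image Prod.snd).card ≤ N) :
    ∃ (σ : Equiv.Perm (Fin n)) (d₀ : Fin m × Fin N →₀ ℕ),
      colMap σ d = colMap (Fin.castLE hn) d₀ := by
  obtain ⟨t, ht, htc⟩ := Finset.exists_subset_card_eq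
    (s := Finset.univ.map (Fin.castLEEmb hn)) (by simpa using hd)
  obtain ⟨σ, hσ⟩ := Equiv.Perm.exists_map_finset_eq _ _ htc.symm
  have hsub : ↑(colMap σ d).support ⊆
      Set.range (Prod.map id (Fin.castLE hn) : Fin m × Fin N → _) := by
    intro y hy
    rw [colMap, Finsupp.mapDomain_support_of_injective
      (Function.injective_id.prodMap σ.injective)] at hy
    obtain ⟨⟨i, k⟩, hk, rfl⟩ := Finset.mem_image.1 hy
    have hσk : σ k ∈ t := hσ ▸ Finset.mem_map_of_mem _ (Finset.mem_image_of_mem Prod.snd hk)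
    obtain ⟨j, -, hj⟩ := Finset.mem_map.1 (ht hσk)
    exact ⟨(i, j), Prod.ext rfl hj⟩
  exact ⟨σ, _, (Finsupp.mapDomain_comapDomain _
    (Function.injective_id.prodMap (Fin.castLE_injective hn)) _ hsub).symm⟩

lemma coeff_colMap_rename {f : Fin N → Fin n} (hf : Function.Injective f)
    (p : MvPolynomial (Fin m × Fin N) R) (d : Fin m × Fin N →₀ ℕ) :
    coeff (colMap f d) (rename (Prod.map id f) p) = coeff d p :=
  coeff_rename_mapDomain _ (Function.injective_id.prodMap hf) p d

lemma mem_invSub_iff {p : MvPolynomial (Fin m × Fin n) R} :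
    p ∈ invSub R m n ↔ ∀ (σ : Equiv.Perm (Fin n)) d, coeff (colMap σ d) p = coeff d p := by
  constructor
  · intro hp σ d
    conv_lhs => rw [← hp σ]
    exact coeff_colMap_rename σ.injective p d
  · intro h σ
    ext d
    rw [← colMap_perm_inv σ d]
    exact (coeff_colMap_rename σ.injective p _).trans (h σ _).symm

variable (R) in
def truncate (hn : N ≤ n) :
    MvPolynomial (Fin m × Fin n) R →ₐ[R] MvPolynomial (Fin m × Fin N) R :=
  killCompl (Function.injective_id.prodMap (Fin.castLE_injective hn))

lemma aeval_eq_truncate (hn : N ≤ n) :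
    aeval (fun q : Fin m × Fin n => if h : (q.2 : ℕ) < N then X (q.1, ⟨q.2, h⟩) else 0) =
      truncate R hn := by
  refine MvPolynomial.algHom_ext fun ⟨i, k⟩ => ?_
  rw [aeval_X]
  split_ifs with hk
  · have hX : (X (i, k) : MvPolynomial (Fin m × Fin n) R) =
        rename (Prod.map id (Fin.castLE hn)) (X (i, ⟨k, hk⟩)) := by
      rw [rename_X]
      rfl
    rw [hX, truncate, killCompl_rename_app]
  · rw [truncate, killCompl, aeval_X, dif_neg]
    rintro ⟨⟨i', j⟩, h⟩
    exact hk (congrArg (fun q : Fin m × Fin n => (q.2 : ℕ)) h ▸ j.isLt)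

lemma coeff_truncate (hn : N ≤ n) (p : MvPolynomial (Fin m × Fin n) R)
    (d : Fin m × Fin N →₀ ℕ) :
    coeff d (truncate R hn p) = coeff (colMap (Fin.castLE hn) d) p :=
  coeff_killCompl _

lemma colMap_viaFintypeEmbedding (hn : N ≤ n) (τ : Equiv.Perm (Fin N))
    (d : Fin m × Fin N →₀ ℕ) :
    colMap (τ.viaFintypeEmbedding (Fin.castLEEmb hn)) (colMap (Fin.castLE hn) d) =
      colMap (Fin.castLE hn) (colMap τ d) := by
  rw [colMap_colMap, colMap_colMap]
  congr 1
  funext j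
  exact τ.viaFintypeEmbedding_apply_image (Fin.castLEEmb hn) j

lemma truncate_mem_invSub (hn : N ≤ n) {p : MvPolynomial (Fin m × Fin n) R}
    (hp : p ∈ invSub R m n) : truncate R hn p ∈ invSub R m N := by
  rw [mem_invSub_iff] at hp ⊢
  intro τ d
  rw [coeff_truncate, coeff_truncate, ← colMap_viaFintypeEmbedding, hp]

lemma truncate_mem_comp (hn : N ≤ n) {a : Fin m → ℕ} {p : MvPolynomial (Fin m × Fin n) R}
    (hp : p ∈ comp R m n a) : truncate R hn p ∈ comp R m N a := by
  intro d hd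
  rw [mem_support_iff, coeff_truncate] at hd
  rw [← wdeg_colMap (Fin.castLE hn)]
  exact hp _ (mem_support_iff.2 hd)

lemma eq_zero_of_truncate_eq_zero (hn : N ≤ n) {a : Fin m → ℕ} (ha : ∑ i, a i ≤ N)
    {p : MvPolynomial (Fin m × Fin n) R} (hp : p ∈ invSub R m n) (hpa : p ∈ comp R m n a)
    (h : truncate R hn p = 0) : p = 0 := by
  ext d
  by_cases hd : d ∈ p.support
  · have hcols : (d.support.image Prod.snd).card ≤ N :=
      (card_image_snd_support_le d).trans (hpa d hd ▸ ha)
    obtain ⟨σ, d₀, hσ⟩ := exists_colMap_perm_eq_colMap_castLE hn d hcols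
    rw [← mem_invSub_iff.1 hp σ, hσ, ← coeff_truncate, h, coeff_zero, coeff_zero]
  · rw [notMem_support_iff.1 hd, coeff_zero]

def colOrbit (d : Fin m × Fin n →₀ ℕ) : Finset (Fin m × Fin n →₀ ℕ) :=
  Finset.univ.image fun σ : Equiv.Perm (Fin n) => colMap σ d

lemma mem_colOrbit {d e : Fin m × Fin n →₀ ℕ} :
    e ∈ colOrbit d ↔ ∃ σ : Equiv.Perm (Fin n), colMap σ d = e := by
  simp [colOrbit]

lemma colMap_mem_colOrbit_iff (σ : Equiv.Perm (Fin n)) {d e : Fin m × Fin n →₀ ℕ} :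
    colMap σ e ∈ colOrbit d ↔ e ∈ colOrbit d := by
  simp only [mem_colOrbit]
  constructor
  · rintro ⟨τ, hτ⟩
    refine ⟨σ⁻¹ * τ, ?_⟩
    rw [colMap_mul, hτ, ← colMap_mul, inv_mul_cancel, colMap_one]
  · rintro ⟨τ, rfl⟩
    exact ⟨σ * τ, colMap_mul σ τ d⟩

variable (R) in
def orbitSum (d : Fin m × Fin n →₀ ℕ) : MvPolynomial (Fin m × Fin n) R :=
  ∑ e ∈ colOrbit d, monomial e 1

lemma coeff_orbitSum (d e : Fin m × Fin n →₀ ℕ) :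
    coeff e (orbitSum R d) = if e ∈ colOrbit d then 1 else 0 := by
  simp only [orbitSum, coeff_sum, coeff_monomial, Finset.sum_ite_eq']

lemma orbitSum_mem_invSub (d : Fin m × Fin n →₀ ℕ) : orbitSum R d ∈ invSub R m n :=
  mem_invSub_iff.2 fun σ e => by simp only [coeff_orbitSum, colMap_mem_colOrbit_iff]

lemma orbitSum_mem_comp {a : Fin m → ℕ} {d : Fin m × Fin n →₀ ℕ} (hd : wdeg m n d = a) :
    orbitSum R d ∈ comp R m n a := by
  intro e he
  rw [mem_support_iff, coeff_orbitSum, ne_eq, ite_eq_right_iff, not_forall] at he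
  obtain ⟨σ, rfl⟩ := mem_colOrbit.1 he.1
  rw [wdeg_colMap, hd]

lemma truncate_orbitSum (hn : N ≤ n) (d : Fin m × Fin N →₀ ℕ) :
    truncate R hn (orbitSum R (colMap (Fin.castLE hn) d)) = orbitSum R d := by
  ext e
  rw [coeff_truncate, coeff_orbitSum, coeff_orbitSum]
  congr 1
  simp only [mem_colOrbit, eq_iff_iff]
  constructor
  · rintro ⟨σ, hσ⟩
    rw [colMap_colMap] at hσ
    exact exists_colMap_eq_of_colMap_eq (Fin.castLE_injective hn)
      (σ.injective.comp (Fin.castLE_injective hn)) hσ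
  · rintro ⟨τ, rfl⟩
    exact ⟨_, colMap_viaFintypeEmbedding hn τ d⟩

lemma support_sub_orbitSum_subset {q : MvPolynomial (Fin m × Fin n) R} (hq : q ∈ invSub R m n)
    (d : Fin m × Fin n →₀ ℕ) :
    (q - coeff d q • orbitSum R d).support ⊆ q.support.erase d := by
  intro e he
  rw [mem_support_iff, coeff_sub, coeff_smul, coeff_orbitSum, smul_eq_mul] at he
  by_cases horb : e ∈ colOrbit d
  · obtain ⟨σ, rfl⟩ := mem_colOrbit.1 horb
    rw [if_pos horb, mem_invSub_iff.1 hq, mul_one, sub_self] at he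
    exact absurd rfl he
  · rw [if_neg horb, mul_zero, sub_zero] at he
    refine Finset.mem_erase.2 ⟨?_, mem_support_iff.2 he⟩
    rintro rfl
    exact horb (mem_colOrbit.2 ⟨1, colMap_one e⟩)

lemma mem_span_orbitSum {q : MvPolynomial (Fin m × Fin n) R} (hq : q ∈ invSub R m n) :
    q ∈ Submodule.span R (orbitSum R '' q.support) := by
  induction hcard : q.support.card using Nat.strong_induction_on generalizing q with
  | _ k ih =>
  obtain rfl | ⟨d, hd⟩ := q.support.eq_empty_or_nonempty.imp_left support_eq_empty.1
  · exact Submodule.zero_mem _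
  set q' := q - coeff d q • orbitSum R d
  have hsub := support_sub_orbitSum_subset hq d
  have hq' : q' ∈ Submodule.span R (orbitSum R '' q'.support) :=
    ih _ (hcard ▸ (Finset.card_le_card hsub).trans_lt (Finset.card_erase_lt_of_mem hd))
      ((invSub R m n).sub_mem hq ((invSub R m n).smul_mem _ (orbitSum_mem_invSub d))) rfl
  have hmono : Submodule.span R (orbitSum R '' q'.support) ≤
      Submodule.span R (orbitSum R '' (q.support : Set (Fin m × Fin n →₀ ℕ))) :=
    Submodule.span_mono <| Set.image_mono <|
      Finset.coe_subset.2 (hsub.trans (Finset.erase_subset _ _))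
  simpa [q'] using Submodule.add_mem _ (hmono hq')
    (Submodule.smul_mem _ (coeff d q) (Submodule.subset_span (Set.mem_image_of_mem _ hd)))

lemma mem_map_truncate (hn : N ≤ n) {a : Fin m → ℕ} {q : MvPolynomial (Fin m × Fin N) R}
    (hq : q ∈ invSub R m N) (hqa : q ∈ comp R m N a) :
    q ∈ (invSub R m n ⊓ comp R m n a).map (truncate R hn).toLinearMap := by
  refine Submodule.span_le.2 ?_ (mem_span_orbitSum hq)
  rintro _ ⟨d, hd, rfl⟩
  refine ⟨orbitSum R (colMap (Fin.castLE hn) d),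
    ⟨orbitSum_mem_invSub _, orbitSum_mem_comp ?_⟩, truncate_orbitSum hn d⟩
  rw [wdeg_colMap, hqa d hd]

end Multisymmetric

open Multisymmetric in
/-- for n ≥ |a| = ∑ⱼ aⱼ, setting the variables x_i(j) with j > |a| to zero
induces an isomorphism A_R(n,m,a)^{Sₙ} ≅ A_R(|a|,m,a)^{S_{|a|}}. -/
theorem stmt18 (R : Type*) [CommRing R] (m n : ℕ) (a : Fin m → ℕ)
    (hn : ∑ i, a i ≤ n) :
    ∃ e : ↥(invSub R m n ⊓ comp R m n a) ≃ₗ[R]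
        ↥(invSub R m (∑ i, a i) ⊓ comp R m (∑ i, a i) a),
      ∀ p : ↥(invSub R m n ⊓ comp R m n a),
        (e p : MvPolynomial (Fin m × Fin (∑ i, a i)) R) =
          aeval (fun q : Fin m × Fin n =>
            if h : (q.2 : ℕ) < ∑ i, a i then X (q.1, ⟨q.2, h⟩) else 0)
            (p : MvPolynomial (Fin m × Fin n) R) := by
  rw [aeval_eq_truncate hn]
  let φ : ↥(invSub R m n ⊓ comp R m n a) →ₗ[R]
      ↥(invSub R m (∑ i, a i) ⊓ comp R m (∑ i, a i) a) :=
    (truncate R hn).toLinearMap.restrict fun p hp =>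
      ⟨truncate_mem_invSub hn hp.1, truncate_mem_comp hn hp.2⟩
  have hinj : Function.Injective φ := by
    refine (injective_iff_map_eq_zero φ).2 fun p hp => Subtype.ext ?_
    exact eq_zero_of_truncate_eq_zero hn le_rfl p.2.1 p.2.2 (congrArg Subtype.val hp)
  have hsurj : Function.Surjective φ := by
    rintro ⟨q, hq, hqa⟩
    obtain ⟨p, hp, hpq⟩ := mem_map_truncate hn hq hqa
    exact ⟨⟨p, hp⟩, Subtype.ext hpq⟩
  exact ⟨LinearEquiv.ofBijective φ ⟨hinj, hsurj⟩, fun p => rfl⟩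

end
end
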